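/- arXiv:1811.02490 — 4 statements merged into one kernel-verified Lean document; each statement's English description precedes it below -/
import Mathlib

section
/- Let k ≥ 1 and let (Ψ, μ) be an indexed root ideal of length ℓ such that style(Ψ,μ)_i ≤ k for all i ∈ [ℓ]. Then the Catalan function H(Ψ;μ) lies in Λ^k = Span_{ℤ[t]}{H_ν(x;t) : ν ∈ Par^k}. -/
open scoped BigOperators Classical

noncomputable section

/-- The coefficient ring `ℤ[t]`, with `t = Polynomial.X`. -/
abbrev CR : Type := Polynomial ℤ

/-- The ring of symmetric functions `Λ = ℤ[t][h₁,h₂,…]`, modeled as the polynomial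
ring over `ℤ[t]` in countably many variables, where the variable `X n`
represents the complete homogeneous symmetric function `h_{n+1}`. -/
abbrev SymF : Type := MvPolynomial ℕ CR

/-- `t` as an element of `Λ`. -/
def tC : SymF := MvPolynomial.C Polynomial.X

/-- The complete homogeneous symmetric function `h_d` for `d : ℤ`:
`h_0 = 1` and `h_d = 0` for `d < 0`. -/
def hh (d : ℤ) : SymF :=
  if d < 0 then 0 else if d = 0 then 1 else MvPolynomial.X (d.toNat - 1)

/-- The (possibly non-partition-indexed) Schur function
`s_γ = det (h_{γ_i + j - i})_{1 ≤ i,j ≤ ℓ}`. -/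
def schur {ℓ : ℕ} (γ : Fin ℓ → ℤ) : SymF :=
  (Matrix.of fun i j : Fin ℓ => hh (γ i + (j : ℤ) - (i : ℤ))).det

/-- The poset of positive roots `Δ⁺_ℓ = {(i,j) : 1 ≤ i < j ≤ ℓ}` (0-based here). -/
def Dplus (ℓ : ℕ) : Finset (Fin ℓ × Fin ℓ) := Finset.univ.filter fun p => p.1 < p.2

/-- `Ψ` is a root ideal: an upper order ideal of `Δ⁺_ℓ`, where
`(a,b) ≤ (c,d)` iff `a ≥ c` and `b ≤ d`. -/
def IsRootIdeal {ℓ : ℕ} (Ψ : Finset (Fin ℓ × Fin ℓ)) : Prop :=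
  Ψ ⊆ Dplus ℓ ∧ ∀ p ∈ Ψ, ∀ q ∈ Dplus ℓ, q.1 ≤ p.1 → p.2 ≤ q.2 → q ∈ Ψ

/-- The Catalan function `H(Ψ;γ) = ∏_{(i,j) ∈ Ψ} (1 - t R_{ij})⁻¹ s_γ`, written out
as the (finitely supported) sum over all ways `n` of applying raising operators
`R_{ij}` with `(i,j) ∈ Ψ`. -/
def catalanFn {ℓ : ℕ} (Ψ : Finset (Fin ℓ × Fin ℓ)) (γ : Fin ℓ → ℤ) : SymF :=
  ∑ᶠ n : Fin ℓ × Fin ℓ → ℕ,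
    if ∀ p, p ∉ Ψ → n p = 0 then
      tC ^ (∑ p : Fin ℓ × Fin ℓ, n p) *
        schur (fun a => γ a + ∑ p : Fin ℓ × Fin ℓ,
          (n p : ℤ) * ((if p.1 = a then 1 else 0) - (if p.2 = a then 1 else 0)))
    else 0

/-- `nr(Ψ)_i`: the number of non-roots of `Ψ` in row `i` (0-based row index,
extended by `0` out of range). -/
def nrN {ℓ : ℕ} (Ψ : Finset (Fin ℓ × Fin ℓ)) (i : ℕ) : ℕ :=
  ((Dplus ℓ \ Ψ).filter fun p => (p.1 : ℕ) = i).card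

/-- `μ ∈ Par^k_ℓ`: a partition with at most `ℓ` parts, all of size at most `k`. -/
def IsPartitionK (k : ℕ) {ℓ : ℕ} (μ : Fin ℓ → ℕ) : Prop :=
  (∀ i j : Fin ℓ, i ≤ j → μ j ≤ μ i) ∧ ∀ i, μ i ≤ k

/-- The root ideal `Δᵏ(μ) = {(i,j) ∈ Δ⁺_ℓ : k - μ_i + i < j}` (1-based), here with
0-based indices. -/
def Dk (k : ℕ) {ℓ : ℕ} (μ : Fin ℓ → ℕ) : Finset (Fin ℓ × Fin ℓ) :=
  (Dplus ℓ).filter fun p => (k : ℤ) - μ p.1 + (p.1 : ℤ) < (p.2 : ℤ)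

/-- The `k`-Schur Catalan function `s^{(k)}_μ = H(Δᵏ(μ); μ)`. -/
def kSchur (k : ℕ) {ℓ : ℕ} (μ : Fin ℓ → ℕ) : SymF :=
  catalanFn (Dk k μ) fun i => (μ i : ℤ)

/-- The modified Hall–Littlewood polynomial `H_μ(x;t) = H(Δ⁺;μ)`. -/
def hallLittlewood {ℓ : ℕ} (μ : Fin ℓ → ℕ) : SymF :=
  catalanFn (Dplus ℓ) fun i => (μ i : ℤ)

/-- `Λᵏ`, the `ℤ[t]`-span of the modified Hall–Littlewood polynomials `H_μ`
for `μ ∈ Par^k`. -/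
def LambdaK (k : ℕ) : Submodule CR SymF :=
  Submodule.span CR {f | ∃ (ℓ : ℕ) (μ : Fin ℓ → ℕ),
    IsPartitionK k μ ∧ (∀ i, 0 < μ i) ∧ f = hallLittlewood μ}

/-- Extend a finite tuple by zeros. -/
def extendFin {ℓ : ℕ} (μ : Fin ℓ → ℕ) : ℕ → ℕ := fun i => if h : i < ℓ then μ ⟨i, h⟩ else 0

/-- Extend a finite integer tuple by zeros. -/
def extendFinZ {ℓ : ℕ} (γ : Fin ℓ → ℤ) : ℕ → ℤ := fun i => if h : i < ℓ then γ ⟨i, h⟩ else 0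

/-- `style(Ψ,γ)_i = nr(Ψ)_i + γ_i` (0-based row index `i`). -/
def styleZN {ℓ : ℕ} (Ψ : Finset (Fin ℓ × Fin ℓ)) (γ : Fin ℓ → ℤ) (i : ℕ) : ℤ :=
  (nrN Ψ i : ℤ) + extendFinZ γ i

/-!
Adding a missing root `α` to `Ψ` gives `H(Ψ; γ) = H(Ψ ∪ α; γ) - t H(Ψ ∪ α; γ + α)`, and both
sequences on the right again have style at most `k`; by induction on `|Δ⁺ ∖ Ψ|` it therefore
suffices to treat Hall–Littlewood functions `H(Δ⁺; γ)` with all `γ_a ≤ k`, for arbitrary `γ ∈ ℤ^ℓ`.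
These are straightened. For an ascent `γ_i < γ_{i+1}`, the function `H(Δ⁺ ∖ α; ·)` with
`α = (i, i+1)` is anti-invariant under the dot action of the transposition `(i i+1)`, which turns
`H(Δ⁺; γ)` into a combination of `H(Δ⁺; γ + c α)` with `0 < c ≤ γ_{i+1} - γ_i`; these have the same
size, entries still `≤ k`, and a smaller weight `∑ a · γ_a`, which is bounded below. A weakly
decreasing `γ` is either a partition, or has a negative last entry (then `H(Δ⁺; γ) = 0`), or a
zero last entry, which can be dropped.
-/
theorem finsum_eq_finsum_mem_add_finsum_add_single {ι M : Type*} [DecidableEq ι]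
    [AddCommMonoid M] {f : (ι → ℕ) → M} (hf : (Function.support f).Finite) (α : ι) :
    ∑ᶠ n, f n = ∑ᶠ n ∈ {n | n α = 0}, f n + ∑ᶠ m, f (m + (Pi.single α 1 : ι → ℕ)) := by
  have hrange : Set.univ \ {n : ι → ℕ | n α = 0} = Set.range (· + (Pi.single α 1 : ι → ℕ)) := by
    ext n
    refine ⟨fun hn => ⟨n - (Pi.single α 1 : ι → ℕ), funext fun p => ?_⟩, ?_⟩
    · by_cases hp : p = α
      · subst hp
        simp_all
        omega
      · simp [hp]
    · rintro ⟨m, rfl⟩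
      simp
  rw [← finsum_mem_univ, ← finsum_mem_inter_add_sdiff' {n | n α = 0} (by simpa using hf),
    Set.univ_inter, hrange, finsum_mem_range (add_left_injective _)]

namespace Catalan

variable {ℓ : ℕ}

def root (α : Fin ℓ × Fin ℓ) (a : Fin ℓ) : ℤ :=
  (if α.1 = a then 1 else 0) - (if α.2 = a then 1 else 0)

def raising (n : Fin ℓ × Fin ℓ → ℕ) (a : Fin ℓ) : ℤ :=
  ∑ p, (n p : ℤ) * root p a

def catalanTerm (Ψ : Finset (Fin ℓ × Fin ℓ)) (γ : Fin ℓ → ℤ) (n : Fin ℓ × Fin ℓ → ℕ) : SymF :=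
  if ∀ p, p ∉ Ψ → n p = 0 then tC ^ (∑ p, n p) * schur (γ + raising n) else 0

theorem catalanFn_eq_finsum (Ψ : Finset (Fin ℓ × Fin ℓ)) (γ : Fin ℓ → ℤ) :
    catalanFn Ψ γ = ∑ᶠ n, catalanTerm Ψ γ n := rfl

theorem mem_Dplus {p : Fin ℓ × Fin ℓ} : p ∈ Dplus ℓ ↔ p.1 < p.2 := by
  simp [Dplus]

theorem hh_of_neg {d : ℤ} (h : d < 0) : hh d = 0 := if_pos h

theorem schur_eq_zero_of_le {γ : Fin ℓ → ℤ} (j : Fin ℓ) (h : γ j + ℓ ≤ j) : schur γ = 0 :=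
  Matrix.det_eq_zero_of_row_eq_zero j fun j' => hh_of_neg (by have := j'.isLt; omega)

theorem sum_mul_raising (w : Fin ℓ → ℤ) (n : Fin ℓ × Fin ℓ → ℕ) :
    ∑ a, w a * raising n a = ∑ p, (n p : ℤ) * (w p.1 - w p.2) := by
  simp only [raising, root, Finset.mul_sum]
  rw [Finset.sum_comm]
  refine Finset.sum_congr rfl fun p _ => ?_
  simp only [mul_sub, mul_ite, mul_one, mul_zero, Finset.sum_sub_distrib, Finset.sum_ite_eq,
    Finset.mem_univ, if_true]
  ring

theorem raising_add_single (n : Fin ℓ × Fin ℓ → ℕ) (α : Fin ℓ × Fin ℓ) :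
    raising (n + Pi.single α 1) = raising n + root α := by
  ext a
  simp [raising, add_mul, Finset.sum_add_distrib, Pi.single_apply]

theorem catalanTerm_eq_of_support {Ψ : Finset (Fin ℓ × Fin ℓ)} {γ : Fin ℓ → ℤ}
    {n : Fin ℓ × Fin ℓ → ℕ} (hn : ∀ p, p ∉ Ψ → n p = 0) :
    catalanTerm Ψ γ n = tC ^ (∑ p, n p) * schur (γ + raising n) := if_pos hn

theorem catalanTerm_eq_zero {Ψ : Finset (Fin ℓ × Fin ℓ)} {γ : Fin ℓ → ℤ}
    {n : Fin ℓ × Fin ℓ → ℕ} {p : Fin ℓ × Fin ℓ} (hp : p ∉ Ψ) (hn : n p ≠ 0) :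
    catalanTerm Ψ γ n = 0 := if_neg fun h => hn (h p hp)

/-- Each `R_{ij}` with `i < j` lowers `∑ a, a * (γ + raising n) a` by at least one, while
`schur (γ + raising n) ≠ 0` bounds every entry of `γ + raising n` from below. -/
theorem sum_le_of_catalanTerm_ne_zero {Ψ : Finset (Fin ℓ × Fin ℓ)} (hΨ : Ψ ⊆ Dplus ℓ)
    {γ : Fin ℓ → ℤ} {n : Fin ℓ × Fin ℓ → ℕ} (h : catalanTerm Ψ γ n ≠ 0) :
    ∑ p, (n p : ℤ) ≤ ∑ a : Fin ℓ, (a : ℤ) * (γ a + ℓ) := by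
  have hn : ∀ p, p ∉ Ψ → n p = 0 := by
    by_contra! ⟨p, hp, hnp⟩
    exact h (catalanTerm_eq_zero hp hnp)
  rw [catalanTerm_eq_of_support hn] at h
  have hrow : ∀ a, -(ℓ : ℤ) < γ a + raising n a := fun a => by
    by_contra! ha
    exact h (by rw [schur_eq_zero_of_le a (by simp only [Pi.add_apply]; omega), mul_zero])
  calc ∑ p, (n p : ℤ)
      ≤ ∑ p, (n p : ℤ) * ((p.2 : ℤ) - p.1) := Finset.sum_le_sum fun p _ => by
        by_cases hp : p ∈ Ψ
        · have : (p.1 : ℤ) < p.2 := by exact_mod_cast mem_Dplus.1 (hΨ hp)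
          nlinarith
        · simp [hn p hp]
    _ = ∑ a : Fin ℓ, -(a : ℤ) * raising n a := by
        rw [sum_mul_raising]
        exact Finset.sum_congr rfl fun p _ => by ring
    _ ≤ ∑ a : Fin ℓ, (a : ℤ) * (γ a + ℓ) := Finset.sum_le_sum fun a _ => by
        nlinarith [hrow a, (a : ℕ).cast_nonneg (α := ℤ)]

theorem support_catalanTerm_finite {Ψ : Finset (Fin ℓ × Fin ℓ)} (hΨ : Ψ ⊆ Dplus ℓ)
    (γ : Fin ℓ → ℤ) : (Function.support (catalanTerm Ψ γ)).Finite := by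
  set B := ∑ a : Fin ℓ, (a : ℤ) * (γ a + ℓ)
  refine (Set.Finite.pi' fun _ => Set.finite_Iic B.toNat).subset fun n hn p => ?_
  have h := sum_le_of_catalanTerm_ne_zero hΨ hn
  have := Finset.single_le_sum (f := fun q => (n q : ℤ)) (fun q _ => (n q).cast_nonneg)
    (Finset.mem_univ p)
  simp only [Set.mem_Iic]
  omega

theorem catalanTerm_add_single {Ψ : Finset (Fin ℓ × Fin ℓ)} {α : Fin ℓ × Fin ℓ} (hα : α ∈ Ψ)
    (γ : Fin ℓ → ℤ) (n : Fin ℓ × Fin ℓ → ℕ) :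
    catalanTerm Ψ γ (n + Pi.single α 1) = tC * catalanTerm Ψ (γ + root α) n := by
  have hsupp : (∀ p, p ∉ Ψ → (n + Pi.single α 1 : Fin ℓ × Fin ℓ → ℕ) p = 0)
      ↔ ∀ p, p ∉ Ψ → n p = 0 :=
    forall₂_congr fun p hp => by simp [show p ≠ α from fun h => hp (h ▸ hα)]
  unfold catalanTerm
  by_cases hn : ∀ p, p ∉ Ψ → n p = 0
  · rw [if_pos (hsupp.2 hn), if_pos hn, raising_add_single, ← add_assoc, add_right_comm γ]
    simp only [Pi.add_apply, Finset.sum_add_distrib, Finset.sum_pi_single', Finset.mem_univ,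
      if_true, pow_succ]
    ring
  · rw [if_neg (mt hsupp.1 hn), if_neg hn, mul_zero]

theorem catalanFn_eq_finsum_mem_add {Ψ : Finset (Fin ℓ × Fin ℓ)} (hΨ : Ψ ⊆ Dplus ℓ)
    {α : Fin ℓ × Fin ℓ} (hα : α ∈ Ψ) (γ : Fin ℓ → ℤ) :
    catalanFn Ψ γ = ∑ᶠ n ∈ {n | n α = 0}, catalanTerm Ψ γ n
      + tC * catalanFn Ψ (γ + root α) := by
  rw [catalanFn_eq_finsum,
    finsum_eq_finsum_mem_add_finsum_add_single (support_catalanTerm_finite hΨ γ) α,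
    catalanFn_eq_finsum, mul_finsum]
  simp_rw [catalanTerm_add_single hα]

theorem catalanFn_insert {Ψ : Finset (Fin ℓ × Fin ℓ)} {α : Fin ℓ × Fin ℓ}
    (hins : insert α Ψ ⊆ Dplus ℓ) (hα : α ∉ Ψ) (γ : Fin ℓ → ℤ) :
    catalanFn (insert α Ψ) γ = catalanFn Ψ γ + tC * catalanFn (insert α Ψ) (γ + root α) := by
  rw [catalanFn_eq_finsum_mem_add hins (Finset.mem_insert_self α Ψ), catalanFn_eq_finsum Ψ]
  congr 1
  have hsupp (n : Fin ℓ × Fin ℓ → ℕ) (hn : n α = 0) :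
      (∀ p, p ∉ insert α Ψ → n p = 0) ↔ ∀ p, p ∉ Ψ → n p = 0 :=
    ⟨fun h p hp => if hpα : p = α then hpα ▸ hn else h p (by simp [hpα, hp]),
      fun h p hp => h p fun hpΨ => hp (Finset.mem_insert_of_mem hpΨ)⟩
  calc ∑ᶠ n ∈ {n | n α = 0}, catalanTerm (insert α Ψ) γ n
      = ∑ᶠ n ∈ {n | n α = 0}, catalanTerm Ψ γ n := finsum_mem_congr rfl fun n hn => by
        unfold catalanTerm
        rw [if_congr (hsupp n hn) rfl rfl]
    _ = ∑ᶠ n ∈ Set.univ, catalanTerm Ψ γ n := finsum_mem_inter_support_eq' _ _ _ fun n hn =>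
        ⟨fun _ => trivial, fun _ => by_contra fun h => hn (catalanTerm_eq_zero hα h)⟩
    _ = _ := finsum_mem_univ _

/-- The dot action `σ · γ = σ(γ + ρ) - ρ` with `ρ = (0, -1, …, 1 - ℓ)`: it permutes the rows of
the Jacobi–Trudi matrix of `γ`. -/
def dotAct (σ : Equiv.Perm (Fin ℓ)) (γ : Fin ℓ → ℤ) (a : Fin ℓ) : ℤ :=
  γ (σ a) + a - σ a

theorem schur_dotAct (σ : Equiv.Perm (Fin ℓ)) (γ : Fin ℓ → ℤ) :
    schur (dotAct σ γ) = Equiv.Perm.sign σ * schur γ := by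
  rw [schur, schur, ← Matrix.det_permute]
  congr 1
  ext i j
  simp only [dotAct, Matrix.submatrix_apply, Matrix.of_apply, id]
  ring_nf

theorem raising_comp_prodCongr (σ : Equiv.Perm (Fin ℓ)) (n : Fin ℓ × Fin ℓ → ℕ) (a : Fin ℓ) :
    raising (fun p => n (σ.prodCongr σ p)) a = raising n (σ a) := by
  rw [raising, raising, ← (σ.prodCongr σ).symm.sum_comp]
  refine Finset.sum_congr rfl fun p _ => ?_
  rw [Equiv.apply_symm_apply]
  simp only [root, Equiv.prodCongr_symm, Equiv.prodCongr_apply,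
    Prod.map_fst, Prod.map_snd, Equiv.symm_apply_eq]

theorem catalanTerm_dotAct (σ : Equiv.Perm (Fin ℓ)) {Φ Ψ : Finset (Fin ℓ × Fin ℓ)}
    (hΦ : ∀ p, p ∈ Φ ↔ (σ p.1, σ p.2) ∈ Ψ) (γ : Fin ℓ → ℤ) (n : Fin ℓ × Fin ℓ → ℕ) :
    catalanTerm Φ (dotAct σ γ) (fun p => n (σ.prodCongr σ p))
      = Equiv.Perm.sign σ * catalanTerm Ψ γ n := by
  have hsupp : (∀ p, p ∉ Φ → n (σ.prodCongr σ p) = 0) ↔ ∀ p, p ∉ Ψ → n p = 0 := by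
    simp only [hΦ]
    exact (σ.prodCongr σ).forall_congr_right (q := fun r => r ∉ Ψ → n r = 0)
  have hrow : dotAct σ γ + raising (fun p => n (σ.prodCongr σ p)) = dotAct σ (γ + raising n) := by
    ext a
    simp only [Pi.add_apply, dotAct, raising_comp_prodCongr]
    ring
  unfold catalanTerm
  by_cases hn : ∀ p, p ∉ Ψ → n p = 0
  · rw [if_pos (hsupp.2 hn), if_pos hn, hrow, schur_dotAct, (σ.prodCongr σ).sum_comp n]
    ring
  · rw [if_neg (mt hsupp.1 hn), if_neg hn, mul_zero]

theorem catalanFn_dotAct (σ : Equiv.Perm (Fin ℓ)) {Φ Ψ : Finset (Fin ℓ × Fin ℓ)}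
    (hΦ : ∀ p, p ∈ Φ ↔ (σ p.1, σ p.2) ∈ Ψ) (γ : Fin ℓ → ℤ) :
    catalanFn Φ (dotAct σ γ) = Equiv.Perm.sign σ * catalanFn Ψ γ := by
  rw [catalanFn_eq_finsum, catalanFn_eq_finsum, mul_finsum,
    ← finsum_comp_equiv ((σ.prodCongr σ).symm.arrowCongr (Equiv.refl ℕ))]
  exact finsum_congr fun n => catalanTerm_dotAct σ hΦ γ n

theorem sum_mul_root (w : Fin ℓ → ℤ) (α : Fin ℓ × Fin ℓ) :
    ∑ a, w a * root α a = w α.1 - w α.2 := by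
  simp [root, mul_sub, Finset.sum_sub_distrib]

theorem mem_erase_Dplus_swap_iff {i j : Fin ℓ} (hij : (i : ℕ) + 1 = j) (p : Fin ℓ × Fin ℓ) :
    p ∈ (Dplus ℓ).erase (i, j)
      ↔ (Equiv.swap i j p.1, Equiv.swap i j p.2) ∈ (Dplus ℓ).erase (i, j) := by
  simp only [Finset.mem_erase, mem_Dplus, Equiv.swap_apply_def, ne_eq, Prod.ext_iff,
    Fin.lt_def, Fin.ext_iff]
  split_ifs <;> omega

theorem dotAct_swap {i j : Fin ℓ} (hij : (i : ℕ) + 1 = j) (γ : Fin ℓ → ℤ) :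
    dotAct (Equiv.swap i j) γ = γ + (γ j - γ i - 1) • root (i, j) := by
  ext a
  have hji : j ≠ i := Fin.ne_of_val_ne (by omega)
  simp only [dotAct, Equiv.swap_apply_def, root, Pi.add_apply, Pi.smul_apply, smul_eq_mul]
  by_cases hai : a = i
  · subst hai
    simp [hji]
    omega
  by_cases haj : a = j
  · subst haj
    simp [hji, hji.symm]
    omega
  simp [hai, haj, Ne.symm hai, Ne.symm haj]

theorem catalanFn_Dplus_eq_erase_add {α : Fin ℓ × Fin ℓ} (hα : α ∈ Dplus ℓ) (γ : Fin ℓ → ℤ) :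
    catalanFn (Dplus ℓ) γ
      = catalanFn ((Dplus ℓ).erase α) γ + tC * catalanFn (Dplus ℓ) (γ + root α) := by
  simpa only [Finset.insert_erase hα] using
    catalanFn_insert (by rw [Finset.insert_erase hα]) (Finset.notMem_erase α (Dplus ℓ)) γ

/-- `H(Δ⁺ ∖ α; ·)` changes sign under the dot action of `(i j)`, which sends `γ` to
`γ + (γ_j - γ_i - 1) α`. -/
theorem catalanFn_Dplus_straighten {i j : Fin ℓ} (hij : (i : ℕ) + 1 = j) (γ : Fin ℓ → ℤ) :
    catalanFn (Dplus ℓ) γ + catalanFn (Dplus ℓ) (γ + (γ j - γ i - 1) • root (i, j))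
      = tC * catalanFn (Dplus ℓ) (γ + root (i, j))
        + tC * catalanFn (Dplus ℓ) (γ + (γ j - γ i) • root (i, j)) := by
  have hα : (i, j) ∈ Dplus ℓ := mem_Dplus.2 (show i < j by rw [Fin.lt_def]; omega)
  have hswap := catalanFn_dotAct (Equiv.swap i j) (mem_erase_Dplus_swap_iff hij) γ
  rw [Equiv.Perm.sign_swap (Fin.ne_of_val_ne (by omega)), dotAct_swap hij] at hswap
  have hshift : γ + (γ j - γ i - 1) • root (i, j) + root (i, j)
      = γ + (γ j - γ i) • root (i, j) := by
    ext a
    simp only [Pi.add_apply, Pi.smul_apply, smul_eq_mul]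
    ring
  have h₁ := catalanFn_Dplus_eq_erase_add hα γ
  have h₂ := catalanFn_Dplus_eq_erase_add hα (γ + (γ j - γ i - 1) • root (i, j))
  rw [hshift] at h₂
  push_cast at hswap
  linear_combination h₁ + h₂ + hswap

section LastRow

variable {m : ℕ}

theorem raising_last {n : Fin (m + 1) × Fin (m + 1) → ℕ}
    (hn : ∀ p, p ∉ Dplus (m + 1) → n p = 0) :
    raising n (Fin.last m) = -∑ i, (n (i, Fin.last m) : ℤ) := by
  rw [raising, Fintype.sum_prod_type, ← Finset.sum_neg_distrib]
  refine Finset.sum_congr rfl fun i _ => ?_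
  by_cases hi : i = Fin.last m
  · subst hi
    have hlast (j : Fin (m + 1)) : n (Fin.last m, j) = 0 :=
      hn _ fun h => (Fin.le_last j).not_gt (mem_Dplus.1 h)
    simp [hlast]
  · simp [root, hi]

theorem catalanFn_eq_zero_of_last_neg {Ψ : Finset (Fin (m + 1) × Fin (m + 1))}
    (hΨ : Ψ ⊆ Dplus (m + 1)) {γ : Fin (m + 1) → ℤ} (h : γ (Fin.last m) < 0) :
    catalanFn Ψ γ = 0 := by
  rw [catalanFn_eq_finsum, ← finsum_zero]
  refine finsum_congr fun n => ?_
  by_cases hn : ∀ p, p ∉ Ψ → n p = 0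
  · have hraise := raising_last fun p hp => hn p fun h => hp (hΨ h)
    have : 0 ≤ ∑ i, (n (i, Fin.last m) : ℤ) := by positivity
    rw [catalanTerm_eq_of_support hn, schur_eq_zero_of_le (Fin.last m) (by simp; omega),
      mul_zero]
  · exact if_neg hn

theorem schur_eq_schur_castSucc {γ : Fin (m + 1) → ℤ} (h : γ (Fin.last m) = 0) :
    schur γ = schur (γ ∘ Fin.castSucc) := by
  rw [schur, Matrix.det_succ_row _ (Fin.last m), Finset.sum_eq_single (Fin.last m)]
  · have hdiag : hh (0 + m - m) = 1 := by simp [hh]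
    simp only [Matrix.of_apply, Fin.val_last, h, hdiag, Fin.succAbove_last]
    -- `α` is explicit: the `-1` of `det_succ_row` carries a `CommRing SymF` instance through
    -- which the instances of `Even.neg_one_pow` are not found by unification.
    rw [Even.neg_one_pow (α := SymF) ⟨m, rfl⟩, one_mul, one_mul]
    rfl
  · intro j _ hj
    have : (j : ℤ) < m := by
      have := Fin.val_lt_last hj
      omega
    simp only [Matrix.of_apply, Fin.val_last, h]
    rw [hh_of_neg (by omega), mul_zero, zero_mul]
  · simp

def extendLast (n : Fin m × Fin m → ℕ) : Fin (m + 1) × Fin (m + 1) → ℕ :=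
  Function.extend (Prod.map Fin.castSucc Fin.castSucc) n 0

theorem prodMap_castSucc_injective :
    Function.Injective (Prod.map (Fin.castSucc (n := m)) (Fin.castSucc (n := m))) :=
  (Fin.castSucc_injective m).prodMap (Fin.castSucc_injective m)

theorem extendLast_apply (n : Fin m × Fin m → ℕ) (q : Fin m × Fin m) :
    extendLast n (Prod.map Fin.castSucc Fin.castSucc q) = n q :=
  prodMap_castSucc_injective.extend_apply _ _ _

theorem extendLast_injective : Function.Injective (extendLast (m := m)) :=
  fun n n' h => funext fun q => by rw [← extendLast_apply n, h, extendLast_apply]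

theorem extendLast_apply_of_notMem_range {n : Fin m × Fin m → ℕ} {p : Fin (m + 1) × Fin (m + 1)}
    (hp : p ∉ Set.range (Prod.map Fin.castSucc Fin.castSucc)) : extendLast n p = 0 :=
  Function.extend_apply' _ _ _ hp

theorem sum_extendLast {M : Type*} [AddCommMonoid M] (n : Fin m × Fin m → ℕ)
    (F : Fin (m + 1) × Fin (m + 1) → ℕ → M) (hF : ∀ p, F p 0 = 0) :
    ∑ p, F p (extendLast n p) = ∑ q, F (Prod.map Fin.castSucc Fin.castSucc q) (n q) :=
  (Fintype.sum_of_injective _ prodMap_castSucc_injective _ _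
    (fun p hp => by rw [extendLast_apply_of_notMem_range hp, hF])
    (fun q => by rw [extendLast_apply])).symm

theorem raising_extendLast_castSucc (n : Fin m × Fin m → ℕ) (a : Fin m) :
    raising (extendLast n) a.castSucc = raising n a := by
  rw [raising, sum_extendLast n (fun p v => (v : ℤ) * root p a.castSucc) (by simp)]
  simp [raising, root]

theorem raising_extendLast_last (n : Fin m × Fin m → ℕ) :
    raising (extendLast n) (Fin.last m) = 0 := by
  rw [raising, sum_extendLast n (fun p v => (v : ℤ) * root p (Fin.last m)) (by simp)]
  simp [root, (Fin.castSucc_lt_last _).ne]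

theorem catalanTerm_extendLast {γ : Fin (m + 1) → ℤ} (h : γ (Fin.last m) = 0)
    (n : Fin m × Fin m → ℕ) :
    catalanTerm (Dplus (m + 1)) γ (extendLast n) = catalanTerm (Dplus m) (γ ∘ Fin.castSucc) n := by
  have hsupp : (∀ p, p ∉ Dplus (m + 1) → extendLast n p = 0) ↔ ∀ q, q ∉ Dplus m → n q = 0 := by
    refine ⟨fun hn q hq => ?_, fun hn p hp => ?_⟩
    · rw [← extendLast_apply n q]
      exact hn _ (by simpa [mem_Dplus] using hq)
    · by_cases hpe : p ∈ Set.range (Prod.map Fin.castSucc Fin.castSucc)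
      · obtain ⟨q, rfl⟩ := hpe
        rw [extendLast_apply]
        exact hn q (by simpa [mem_Dplus] using hp)
      · exact extendLast_apply_of_notMem_range hpe
  unfold catalanTerm
  by_cases hn : ∀ q, q ∉ Dplus m → n q = 0
  · rw [if_pos (hsupp.2 hn), if_pos hn, sum_extendLast n (fun _ v => v) fun _ => rfl,
      schur_eq_schur_castSucc (by simp [h, raising_extendLast_last])]
    congr 2
    ext a
    simp [raising_extendLast_castSucc]
  · rw [if_neg (mt hsupp.1 hn), if_neg hn]

theorem support_catalanTerm_subset_range_extendLast {γ : Fin (m + 1) → ℤ}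
    (h : γ (Fin.last m) = 0) :
    Function.support (catalanTerm (Dplus (m + 1)) γ) ⊆ Set.range extendLast := by
  intro n hn
  have hsupp : ∀ p, p ∉ Dplus (m + 1) → n p = 0 := by
    by_contra! ⟨p, hp, hnp⟩
    exact hn (catalanTerm_eq_zero hp hnp)
  have hcol : ∀ i, n (i, Fin.last m) = 0 := by
    by_contra! ⟨i, hi⟩
    have hraise := raising_last hsupp
    have : (n (i, Fin.last m) : ℤ) ≤ ∑ i, (n (i, Fin.last m) : ℤ) :=
      Finset.single_le_sum (f := fun i => (n (i, Fin.last m) : ℤ)) (by simp) (Finset.mem_univ i)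
    apply hn
    rw [catalanTerm_eq_of_support hsupp, schur_eq_zero_of_le (Fin.last m) (by simp; omega),
      mul_zero]
  refine ⟨fun q => n (Prod.map Fin.castSucc Fin.castSucc q), funext fun p => ?_⟩
  by_cases hpe : p ∈ Set.range (Prod.map Fin.castSucc Fin.castSucc)
  · obtain ⟨q, rfl⟩ := hpe
    rw [extendLast_apply]
  · rw [extendLast_apply_of_notMem_range hpe]
    have hlast : p.1 = Fin.last m ∨ p.2 = Fin.last m := by
      by_contra! hne
      exact hpe ⟨(p.1.castPred hne.1, p.2.castPred hne.2), by simp⟩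
    rcases hlast with h₁ | h₂
    · exact (hsupp p fun hp => (Fin.le_last p.2).not_gt (h₁ ▸ mem_Dplus.1 hp)).symm
    · rw [show p = (p.1, Fin.last m) from Prod.ext rfl h₂]
      exact (hcol _).symm

theorem catalanFn_Dplus_succ {γ : Fin (m + 1) → ℤ} (h : γ (Fin.last m) = 0) :
    catalanFn (Dplus (m + 1)) γ = catalanFn (Dplus m) (γ ∘ Fin.castSucc) := by
  rw [catalanFn_eq_finsum, ← finsum_mem_univ,
    finsum_mem_inter_support_eq' _ Set.univ (Set.range extendLast) fun n hn =>
      ⟨fun _ => support_catalanTerm_subset_range_extendLast h hn, fun _ => trivial⟩,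
    finsum_mem_range extendLast_injective]
  exact finsum_congr (catalanTerm_extendLast h)

end LastRow

def weight (γ : Fin ℓ → ℤ) : ℤ := ∑ a : Fin ℓ, (a : ℤ) * γ a

theorem weight_add_smul_root (γ : Fin ℓ → ℤ) (c : ℤ) (α : Fin ℓ × Fin ℓ) :
    weight (γ + c • root α) = weight γ + c * (α.1 - α.2) := by
  simp only [weight, Pi.add_apply, Pi.smul_apply, smul_eq_mul, mul_add, Finset.sum_add_distrib,
    mul_left_comm _ c, ← Finset.mul_sum, sum_mul_root]

theorem sum_add_smul_root (γ : Fin ℓ → ℤ) (c : ℤ) (α : Fin ℓ × Fin ℓ) :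
    ∑ a, (γ + c • root α) a = ∑ a, γ a := by
  simpa [Finset.sum_add_distrib, ← Finset.mul_sum] using sum_mul_root (fun _ => c) α

theorem add_smul_root_le {k : ℤ} {γ : Fin ℓ → ℤ} (hγ : ∀ a, γ a ≤ k) {α : Fin ℓ × Fin ℓ}
    (hα : α.1 ≠ α.2) {c : ℤ} (hc₀ : 0 ≤ c) (hc : c ≤ γ α.2 - γ α.1) (a : Fin ℓ) :
    (γ + c • root α) a ≤ k := by
  have := hγ a
  have := hγ α.2
  simp only [Pi.add_apply, Pi.smul_apply, smul_eq_mul, root]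
  split_ifs with h₁ h₂ h₂
  · exact absurd (h₁.trans h₂.symm) hα
  · subst h₁; linarith
  · linarith
  · linarith

/-- Since `γ ≤ k`, every entry of `γ` is at least `∑ γ - (ℓ - 1) k`. -/
theorem le_weight {k : ℤ} {γ : Fin ℓ → ℤ} (hγ : ∀ a, γ a ≤ k) :
    (∑ a : Fin ℓ, (a : ℤ)) * (∑ a, γ a - (ℓ - 1) * k) ≤ weight γ := by
  rw [weight, Finset.sum_mul]
  refine Finset.sum_le_sum fun b _ => mul_le_mul_of_nonneg_left ?_ (by positivity)
  have hrest : ∑ a ∈ Finset.univ.erase b, γ a ≤ (ℓ - 1) * k := by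
    have := Finset.sum_le_sum fun a (_ : a ∈ Finset.univ.erase b) => hγ a
    rwa [Finset.sum_const, Finset.card_erase_of_mem (Finset.mem_univ b), Finset.card_univ,
      Fintype.card_fin, nsmul_eq_mul, Nat.cast_sub b.pos, Nat.cast_one] at this
  linarith [Finset.add_sum_erase Finset.univ γ (Finset.mem_univ b)]

theorem weight_induction {k : ℤ} {P : (Fin ℓ → ℤ) → Prop}
    (step : ∀ γ, (∀ a, γ a ≤ k) →
      (∀ γ', (∀ a, γ' a ≤ k) → ∑ a, γ' a = ∑ a, γ a → weight γ' < weight γ → P γ') → P γ)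
    (γ : Fin ℓ → ℤ) (hγ : ∀ a, γ a ≤ k) : P γ := by
  set B := (∑ a : Fin ℓ, (a : ℤ)) * (∑ a, γ a - (ℓ - 1) * k)
  suffices ∀ N : ℕ, ∀ γ', (∀ a, γ' a ≤ k) → ∑ a, γ' a = ∑ a, γ a → weight γ' - B ≤ N → P γ' from
    this _ γ hγ rfl (Int.self_le_toNat _)
  intro N
  induction N using Nat.strong_induction_on with
  | _ N ih =>
    intro γ' hγ' hsum hN
    refine step γ' hγ' fun γ'' hγ'' hsum' hlt => ih (weight γ'' - B).toNat ?_ γ'' hγ''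
      (hsum'.trans hsum) (Int.self_le_toNat _)
    have := le_weight hγ''
    rw [hsum', hsum] at this
    omega

theorem tC_mul_mem {M : Submodule CR SymF} {x : SymF} (hx : x ∈ M) : tC * x ∈ M := by
  simpa [tC, MvPolynomial.smul_eq_C_mul] using M.smul_mem Polynomial.X hx

theorem catalanFn_Dplus_mem_of_ascent (M : Submodule CR SymF) {i j : Fin ℓ}
    (hij : (i : ℕ) + 1 = j) {γ : Fin ℓ → ℤ} (hlt : γ i < γ j)
    (hM : ∀ c : ℤ, 0 < c → c ≤ γ j - γ i → catalanFn (Dplus ℓ) (γ + c • root (i, j)) ∈ M) :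
    catalanFn (Dplus ℓ) γ ∈ M := by
  have h := catalanFn_Dplus_straighten hij γ
  have hone := tC_mul_mem (hM 1 one_pos (by omega))
  rw [one_smul] at hone
  rcases (show 1 ≤ γ j - γ i by omega).eq_or_lt with hd | hd
  · -- `γ_j = γ_i + 1`: the dot action fixes `γ` and the relation reads `2 H(γ) = 2 t H(γ + α)`.
    rw [← hd, sub_self, zero_smul, add_zero, one_smul, ← two_mul, ← two_mul] at h
    rw [mul_left_cancel₀ two_ne_zero h]
    exact hone
  · rw [eq_sub_of_add_eq h]
    exact M.sub_mem (M.add_mem hone (tC_mul_mem (hM _ (by omega) le_rfl)))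
      (hM _ (by omega) (by omega))

theorem catalanFn_Dplus_mem_LambdaK_of_antitone {k : ℕ} {γ : Fin ℓ → ℤ} (hanti : Antitone γ)
    (hpos : ∀ a, 0 < γ a) (hk : ∀ a, γ a ≤ k) : catalanFn (Dplus ℓ) γ ∈ LambdaK k := by
  obtain ⟨μ, rfl⟩ : ∃ μ : Fin ℓ → ℕ, γ = fun a => (μ a : ℤ) :=
    ⟨fun a => (γ a).toNat, funext fun a => (Int.toNat_of_nonneg (hpos a).le).symm⟩
  refine Submodule.subset_span ⟨ℓ, μ, ⟨fun i j hij => ?_, fun i => ?_⟩, fun i => ?_, rfl⟩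
  · simpa using hanti hij
  · simpa using hk i
  · simpa using hpos i

theorem catalanFn_Dplus_mem_LambdaK (k : ℕ) :
    ∀ {ℓ : ℕ} (γ : Fin ℓ → ℤ), (∀ a, γ a ≤ k) → catalanFn (Dplus ℓ) γ ∈ LambdaK k
  | 0, _, hγ => catalanFn_Dplus_mem_LambdaK_of_antitone (fun a => a.elim0) (fun a => a.elim0) hγ
  | m + 1, γ, hγ => by
    refine weight_induction (P := fun γ => catalanFn (Dplus (m + 1)) γ ∈ LambdaK k)
      (fun γ hγ ih => ?_) γ hγ
    by_cases hasc : ∃ j : Fin m, γ j.castSucc < γ j.succ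
    · obtain ⟨j, hlt⟩ := hasc
      have hne : j.castSucc ≠ j.succ := Fin.castSucc_lt_succ.ne
      refine catalanFn_Dplus_mem_of_ascent _ (by simp) hlt fun c hc hcd =>
        ih _ (add_smul_root_le hγ hne hc.le hcd) (sum_add_smul_root γ c _) ?_
      rw [weight_add_smul_root]
      simp only [Fin.val_castSucc, Fin.val_succ]
      push_cast
      linarith
    · simp only [not_exists, not_lt] at hasc
      have hanti : Antitone γ := Fin.antitone_iff_succ_le.2 hasc
      rcases lt_trichotomy (γ (Fin.last m)) 0 with hneg | hzero | hpos
      · rw [catalanFn_eq_zero_of_last_neg subset_rfl hneg]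
        exact zero_mem _
      · rw [catalanFn_Dplus_succ hzero]
        exact catalanFn_Dplus_mem_LambdaK k _ fun a => hγ _
      · exact catalanFn_Dplus_mem_LambdaK_of_antitone hanti
          (fun a => hpos.trans_le (hanti (Fin.le_last a))) hγ

theorem nrN_Dplus (i : ℕ) : nrN (Dplus ℓ) i = 0 := by
  simp [nrN]

theorem nrN_insert {Ψ : Finset (Fin ℓ × Fin ℓ)} {α : Fin ℓ × Fin ℓ} (hα : α ∈ Dplus ℓ)
    (hαΨ : α ∉ Ψ) (i : Fin ℓ) :
    (nrN (insert α Ψ) i : ℤ) = nrN Ψ i - if α.1 = i then 1 else 0 := by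
  rw [nrN, nrN, Finset.sdiff_insert, Finset.filter_erase]
  split_ifs with hi
  · rw [Finset.card_erase_of_mem (by simp [hα, hαΨ, hi]), Nat.cast_sub]
    · simp
    · exact Finset.card_pos.2 ⟨α, by simp [hα, hαΨ, hi]⟩
  · rw [Finset.erase_eq_of_notMem (by simp [Fin.val_inj, hi]), sub_zero]

theorem catalanFn_mem_LambdaK_of_subset (k : ℕ) {Ψ : Finset (Fin ℓ × Fin ℓ)}
    (hΨ : Ψ ⊆ Dplus ℓ) (γ : Fin ℓ → ℤ) (hγ : ∀ i : Fin ℓ, nrN Ψ i + γ i ≤ k) :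
    catalanFn Ψ γ ∈ LambdaK k := by
  induction h : (Dplus ℓ \ Ψ).card generalizing Ψ γ with
  | zero =>
    obtain rfl : Ψ = Dplus ℓ :=
      hΨ.antisymm (Finset.sdiff_eq_empty_iff_subset.1 (Finset.card_eq_zero.1 h))
    exact catalanFn_Dplus_mem_LambdaK k γ fun i => by simpa [nrN_Dplus] using hγ i
  | succ c ih =>
    obtain ⟨α, hα⟩ := Finset.card_pos.1 (by omega : 0 < (Dplus ℓ \ Ψ).card)
    obtain ⟨hαD, hαΨ⟩ := Finset.mem_sdiff.1 hα
    have hins : insert α Ψ ⊆ Dplus ℓ := Finset.insert_subset hαD hΨ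
    have hcard : (Dplus ℓ \ insert α Ψ).card = c := by
      rw [Finset.sdiff_insert, Finset.card_erase_of_mem hα, h, Nat.add_sub_cancel]
    rw [eq_sub_of_add_eq (catalanFn_insert hins hαΨ γ).symm]
    refine Submodule.sub_mem _ (ih hins γ (fun i => ?_) hcard)
      (tC_mul_mem (ih hins _ (fun i => ?_) hcard))
    · have := hγ i
      rw [nrN_insert hαD hαΨ]
      split_ifs <;> omega
    · have := hγ i
      rw [nrN_insert hαD hαΨ]
      simp only [Pi.add_apply, root]
      split_ifs <;> omega

end Catalan

theorem catalanFn_mem_LambdaK_general (k : ℕ) {ℓ : ℕ}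
    (Ψ : Finset (Fin ℓ × Fin ℓ)) (hΨ : IsRootIdeal Ψ) (μ : Fin ℓ → ℤ)
    (hstyle : ∀ i, i < ℓ → styleZN Ψ μ i ≤ (k : ℤ)) :
    catalanFn Ψ μ ∈ LambdaK k :=
  Catalan.catalanFn_mem_LambdaK_of_subset k hΨ.1 μ fun i => by
    simpa [styleZN, extendFinZ] using hstyle i i.isLt

/-- Let `k ≥ 1` and let `(Ψ, μ)` be an indexed root ideal of
length `ℓ` such that `style(Ψ,μ)_i ≤ k` for all `i ∈ [ℓ]`.  Then the Catalan
function `H(Ψ;μ)` lies in `Λᵏ = Span_{ℤ[t]}{H_ν(x;t) : ν ∈ Par^k}`. -/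
theorem catalanFn_mem_LambdaK (k : ℕ) (hk : 1 ≤ k) {ℓ : ℕ}
    (Ψ : Finset (Fin ℓ × Fin ℓ)) (hΨ : IsRootIdeal Ψ) (μ : Fin ℓ → ℤ)
    (hstyle : ∀ i, i < ℓ → styleZN Ψ μ i ≤ (k : ℤ)) :
    catalanFn Ψ μ ∈ LambdaK k :=
  catalanFn_mem_LambdaK_general k Ψ hΨ μ hstyle

end
end

section
/- Catalan operators obey the composition law: for any indexed root ideals (Ψ,μ) of length r and (Φ,ν) of length ℓ−r, the composition of operators satisfies H^Ψ_μ ∘ H^Φ_ν = H^{Ψ⊎Φ}_{μν} in End_{ℤ[t]}(Λ). -/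
open scoped BigOperators Classical

noncomputable section

section Operators

/-- The generating series `∑_j (h_j^⊥ f) u^j` of the skewing operators `h_j^⊥`
(the adjoints of multiplication by `h_j` for the Hall inner product), as the
`ℤ[t]`-algebra map determined by `h_n ↦ ∑_{j=0}^{n} h_{n-j} u^j`. -/
def hPerpSeries : SymF →ₐ[CR] Polynomial SymF :=
  MvPolynomial.aeval fun n : ℕ =>
    ∑ j ∈ Finset.range (n + 2), Polynomial.C (hh ((n : ℤ) + 1 - j)) * Polynomial.X ^ j

/-- The skewing operator `h_j^⊥`. -/
def hPerp (j : ℕ) (f : SymF) : SymF := (hPerpSeries f).coeff j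

/-- The generating series `∑_i (e_i^⊥ f) u^i` of the skewing operators `e_i^⊥`
(the adjoints of multiplication by the elementary symmetric functions `e_i`),
as the `ℤ[t]`-algebra map determined by `h_n ↦ h_n + h_{n-1} u`. -/
def ePerpSeries : SymF →ₐ[CR] Polynomial SymF :=
  MvPolynomial.aeval fun n : ℕ =>
    Polynomial.C (hh ((n : ℤ) + 1)) + Polynomial.C (hh (n : ℤ)) * Polynomial.X

/-- The skewing operator `e_i^⊥`. -/
def ePerp (i : ℕ) (f : SymF) : SymF := (ePerpSeries f).coeff i

/-- The Garsia–Jing vertex operator `B_m = ∑_{i,j ≥ 0} (-1)^i t^j h_{m+i+j} e_i^⊥ h_j^⊥`. -/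
def GJ (m : ℤ) (f : SymF) : SymF :=
  ∑ᶠ (i : ℕ) (j : ℕ), (-1 : SymF) ^ i * tC ^ j * hh (m + i + j) * ePerp i (hPerp j f)

/-- `B̃_γ = B_{γ_1} B_{γ_2} ⋯ B_{γ_ℓ}` (composition of Garsia–Jing operators). -/
def GJt {ℓ : ℕ} (γ : Fin ℓ → ℤ) (f : SymF) : SymF := (List.ofFn γ).foldr GJ f

/-- The Catalan operator `H^Ψ_γ = ∏_{(i,j) ∈ Δ⁺_ℓ \ Ψ} (1 - t 𝐑_{ij}) B̃_γ`,
expanded as a finite signed sum over subsets of `Δ⁺_ℓ \ Ψ`. -/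
def catalanOp {ℓ : ℕ} (Ψ : Finset (Fin ℓ × Fin ℓ)) (γ : Fin ℓ → ℤ) (f : SymF) : SymF :=
  ∑ S ∈ (Dplus ℓ \ Ψ).powerset, (-1 : SymF) ^ S.card * tC ^ S.card *
    GJt (fun a => γ a + ∑ p ∈ S,
      ((if p.1 = a then 1 else 0) - (if p.2 = a then (1 : ℤ) else 0))) f

/-- The generalized Hall–Littlewood vertex operator
`B_γ = ∏_{(i,j) ∈ Δ⁺_ℓ} (1 - t 𝐑_{ij}) B̃_γ = H^∅_γ`. -/
def vertexB {ℓ : ℕ} (γ : Fin ℓ → ℤ) : SymF → SymF :=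
  catalanOp (∅ : Finset (Fin ℓ × Fin ℓ)) γ

/-- The root ideal `Ψ ⊎ Φ ⊆ Δ⁺_{r+m}`, determined by
`Δ⁺_{r+m} \ (Ψ ⊎ Φ) = (Δ⁺_r \ Ψ) ⊔ {(i+r, j+r) : (i,j) ∈ Δ⁺_m \ Φ}`. -/
def uplus {r m : ℕ} (Ψ : Finset (Fin r × Fin r)) (Φ : Finset (Fin m × Fin m)) :
    Finset (Fin (r + m) × Fin (r + m)) :=
  (Dplus (r + m)).filter fun p =>
    ¬((∃ q : Fin r × Fin r, q ∉ Ψ ∧ q.1 < q.2 ∧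
          (p.1 : ℕ) = (q.1 : ℕ) ∧ (p.2 : ℕ) = (q.2 : ℕ)) ∨
      (∃ q : Fin m × Fin m, q ∉ Φ ∧ q.1 < q.2 ∧
          (p.1 : ℕ) = (q.1 : ℕ) + r ∧ (p.2 : ℕ) = (q.2 : ℕ) + r))

/-- `Λ_ℤ = ℤ[h₁,h₂,…] = Λ/(t-1)`. -/
abbrev SymFZ : Type := MvPolynomial ℕ ℤ

/-- The specialization `t = 1`, i.e. the canonical projection `Λ → Λ/(t-1) = Λ_ℤ`. -/
def specT1 : SymF →+* SymFZ := MvPolynomial.map (Polynomial.evalRingHom 1)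

end Operators

/-!
The Garsia–Jing operators are `ℤ[t]`-linear: `h_j^⊥` and `e_i^⊥` are coefficients of
`ℤ[t]`-algebra maps, and only finitely many terms of `B_m f` are nonzero. So `H^Ψ_γ` is the
endomorphism `∑_{S ⊆ Δ⁺ ∖ Ψ} (-t)^{|S|} B̃_{γ + ∑_{(i,j) ∈ S} (ε_i - ε_j)}` of `Λ`, and composing
Catalan operators is multiplying in `End(Λ)`. The non-roots of `Ψ ⊎ Φ` are those of `Ψ` together
with the shifted non-roots of `Φ`, so their subsets split uniquely as `S ⊔ T`; raising along `S`
moves only the first `r` entries and raising along `T` only the last `m`, and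
`B̃_{αβ} = B̃_α B̃_β`, so the expanded product matches `H^{Ψ⊎Φ}_{μν}` term by term.
-/

open Finset

namespace Finset

lemma sum_powerset_union {α M : Type*} [DecidableEq α] [AddCommMonoid M]
    {s t : Finset α} (hst : Disjoint s t) (F : Finset α → M) :
    ∑ U ∈ (s ∪ t).powerset, F U = ∑ A ∈ s.powerset, ∑ B ∈ t.powerset, F (A ∪ B) := by
  induction s using Finset.induction_on generalizing F with
  | empty => simp
  | insert a s ha ih =>
    have hst' : Disjoint s t := disjoint_of_subset_left (subset_insert a s) hst
    have hat : a ∉ s ∪ t := by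
      simp [ha, disjoint_left.mp hst (mem_insert_self a s)]
    rw [insert_union, sum_powerset_insert hat, sum_powerset_insert ha, ih hst', ih hst']
    simp only [insert_union]

lemma sum_powerset_map {α β M : Type*} [AddCommMonoid M] (e : α ↪ β) (s : Finset α)
    (F : Finset β → M) :
    ∑ U ∈ (s.map e).powerset, F U = ∑ A ∈ s.powerset, F (A.map e) := by
  have : (s.map e).powerset = s.powerset.map (mapEmbedding e).toEmbedding := by
    ext U
    simp [subset_map_iff, eq_comm]
  rw [this, sum_map]
  rfl

end Finset

namespace Fin

variable {r m : ℕ}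

lemma castAdd_ne_natAdd (i : Fin r) (j : Fin m) : castAdd m i ≠ natAdd r j := by
  rw [ne_eq, Fin.ext_iff, val_castAdd, val_natAdd]
  omega

lemma append_add_append {α : Type*} [Add α] (a c : Fin r → α) (b d : Fin m → α) :
    append a b + append c d = append (a + c) (b + d) := by
  ext i
  refine addCases (fun i => ?_) (fun i => ?_) i <;> simp

end Fin

section SkewingOperators

variable (j : ℕ) (a : CR) (f g : SymF)

lemma hPerp_add : hPerp j (f + g) = hPerp j f + hPerp j g := by
  simp [hPerp]

lemma hPerp_smul : hPerp j (a • f) = a • hPerp j f := by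
  simp [hPerp]

lemma ePerp_add : ePerp j (f + g) = ePerp j f + ePerp j g := by
  simp [ePerp]

lemma ePerp_smul : ePerp j (a • f) = a • ePerp j f := by
  simp [ePerp]

end SkewingOperators

section GarsiaJing

variable (m : ℤ)

lemma hasFiniteSupport_GJ_summand (f : SymF) :
    Function.HasFiniteSupport fun p : ℕ × ℕ =>
      (-1 : SymF) ^ p.1 * tC ^ p.2 * hh (m + p.1 + p.2) * ePerp p.1 (hPerp p.2 f) := by
  refine ((hPerpSeries f).support.finite_toSet.biUnion fun j _ =>
    ((ePerpSeries (hPerp j f)).support.finite_toSet.prod (Set.finite_singleton j))).subset ?_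
  rintro ⟨i, j⟩ hij
  have hj : hPerp j f ≠ 0 := fun h => hij (by simp [h, ePerp])
  have hi : ePerp i (hPerp j f) ≠ 0 := fun h => hij (by simp [h])
  exact Set.mem_biUnion (Polynomial.mem_support_iff.mpr hj)
    ⟨Polynomial.mem_support_iff.mpr hi, rfl⟩

lemma GJ_eq_finsum_prod (f : SymF) :
    GJ m f = ∑ᶠ p : ℕ × ℕ,
      (-1 : SymF) ^ p.1 * tC ^ p.2 * hh (m + p.1 + p.2) * ePerp p.1 (hPerp p.2 f) :=
  (finsum_curry _ (hasFiniteSupport_GJ_summand m f)).symm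

lemma GJ_add (f g : SymF) : GJ m (f + g) = GJ m f + GJ m g := by
  rw [GJ_eq_finsum_prod, GJ_eq_finsum_prod, GJ_eq_finsum_prod,
    ← finsum_add_distrib (hasFiniteSupport_GJ_summand m f) (hasFiniteSupport_GJ_summand m g)]
  simp only [hPerp_add, ePerp_add, mul_add]

lemma GJ_smul (a : CR) (f : SymF) : GJ m (a • f) = a • GJ m f := by
  rw [GJ_eq_finsum_prod, GJ_eq_finsum_prod, smul_finsum' _ (hasFiniteSupport_GJ_summand m f)]
  simp only [hPerp_smul, ePerp_smul, mul_smul_comm]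

def gjLinear : SymF →ₗ[CR] SymF where
  toFun := GJ m
  map_add' := GJ_add m
  map_smul' := GJ_smul m

end GarsiaJing

section Raising

variable {ℓ : ℕ}

def gjtEnd (γ : Fin ℓ → ℤ) : Module.End CR SymF := ((List.ofFn γ).map gjLinear).prod

lemma gjtEnd_apply (γ : Fin ℓ → ℤ) (f : SymF) : gjtEnd γ f = GJt γ f := by
  rw [gjtEnd, GJt]
  induction List.ofFn γ with
  | nil => rfl
  | cons a l ih => rw [List.map_cons, List.prod_cons, Module.End.mul_apply, ih]; rfl

lemma gjtEnd_append {r m : ℕ} (α : Fin r → ℤ) (β : Fin m → ℤ) :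
    gjtEnd (Fin.append α β) = gjtEnd α * gjtEnd β := by
  simp only [gjtEnd, List.ofFn_fin_append, List.map_append, List.prod_append]

def root (p : Fin ℓ × Fin ℓ) : Fin ℓ → ℤ := Pi.single p.1 1 - Pi.single p.2 1

-- `∏_{(i,j) ∈ N} (1 - t R_{ij}) B̃_γ`, expanded over the subsets of `N`
def raisingOp (N : Finset (Fin ℓ × Fin ℓ)) (γ : Fin ℓ → ℤ) : Module.End CR SymF :=
  ∑ S ∈ N.powerset, (-Polynomial.X : CR) ^ #S • gjtEnd (γ + ∑ p ∈ S, root p)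

lemma catalanOp_eq_raisingOp (Ψ : Finset (Fin ℓ × Fin ℓ)) (γ : Fin ℓ → ℤ) :
    catalanOp Ψ γ = raisingOp (Dplus ℓ \ Ψ) γ := by
  funext f
  simp only [catalanOp, raisingOp, LinearMap.sum_apply, LinearMap.smul_apply,
    gjtEnd_apply]
  refine sum_congr rfl fun S _ => ?_
  have hγ : (fun a => γ a + ∑ p ∈ S,
      ((if p.1 = a then 1 else 0) - (if p.2 = a then (1 : ℤ) else 0))) = γ + ∑ p ∈ S, root p := by
    ext a
    simp [root, Pi.single_apply, eq_comm]
  rw [hγ, MvPolynomial.smul_eq_C_mul, tC, neg_pow, map_mul, map_pow, map_pow, map_neg, map_one]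

end Raising

section Concatenation

variable {r m : ℕ}

def castAddPair (m : ℕ) : Fin r × Fin r ↪ Fin (r + m) × Fin (r + m) :=
  (Fin.castAddEmb m).prodMap (Fin.castAddEmb m)

def natAddPair (r : ℕ) : Fin m × Fin m ↪ Fin (r + m) × Fin (r + m) :=
  (Fin.natAddEmb r).prodMap (Fin.natAddEmb r)

lemma disjoint_map_castAddPair_natAddPair (S : Finset (Fin r × Fin r))
    (T : Finset (Fin m × Fin m)) : Disjoint (S.map (castAddPair m)) (T.map (natAddPair r)) := by
  rw [disjoint_left]
  rintro _ hp hq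
  obtain ⟨p, -, rfl⟩ := mem_map.mp hp
  obtain ⟨q, -, hq⟩ := mem_map.mp hq
  exact Fin.castAdd_ne_natAdd p.1 q.1 (congrArg Prod.fst hq).symm

lemma sum_root_union_map (S : Finset (Fin r × Fin r)) (T : Finset (Fin m × Fin m)) :
    ∑ p ∈ S.map (castAddPair m) ∪ T.map (natAddPair r), root p =
      Fin.append (∑ p ∈ S, root p) (∑ q ∈ T, root q) := by
  rw [sum_union (disjoint_map_castAddPair_natAddPair S T), sum_map, sum_map]
  ext i
  refine Fin.addCases (fun i => ?_) (fun i => ?_) i <;>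
    simp [root, castAddPair, natAddPair, Pi.single_apply, Fin.castAdd_ne_natAdd,
      (Fin.castAdd_ne_natAdd _ _).symm]

lemma compl_uplus (Ψ : Finset (Fin r × Fin r)) (Φ : Finset (Fin m × Fin m)) :
    Dplus (r + m) \ uplus Ψ Φ =
      (Dplus r \ Ψ).map (castAddPair m) ∪ (Dplus m \ Φ).map (natAddPair r) := by
  ext ⟨a, b⟩
  simp only [Dplus, uplus, Prod.exists, not_or, not_exists, not_and, mem_sdiff, mem_filter,
    mem_univ, true_and, not_forall, Decidable.not_not, castAddPair, natAddPair,
    mem_union, mem_map, Function.Embedding.coe_prodMap, Fin.coe_castAddEmb, Prod.map_apply,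
    Prod.mk.injEq, Fin.ext_iff, Fin.val_castAdd, Fin.natAddEmb_apply, Fin.val_natAdd]
  constructor
  · rintro ⟨hab, h⟩
    by_contra hn
    push Not at hn
    obtain ⟨x, y, hΦ, hxy, hx, hy⟩ :=
      h hab fun x y hΨ hxy hx hy => hn.1 x y ⟨hxy, hΨ⟩ hx.symm hy.symm
    exact hn.2 x y ⟨hxy, hΦ⟩ (by omega) (by omega)
  · rintro (⟨x, y, ⟨hxy, hΨ⟩, hx, hy⟩ | ⟨x, y, ⟨hxy, hΦ⟩, hx, hy⟩)
    · exact ⟨by omega, fun _ h => absurd hy.symm (h x y hΨ hxy hx.symm)⟩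
    · exact ⟨by omega, fun _ _ => ⟨x, y, hΦ, hxy, by omega, by omega⟩⟩

lemma raisingOp_mul_raisingOp (N₁ : Finset (Fin r × Fin r)) (N₂ : Finset (Fin m × Fin m))
    (μ : Fin r → ℤ) (ν : Fin m → ℤ) :
    raisingOp N₁ μ * raisingOp N₂ ν =
      raisingOp (N₁.map (castAddPair m) ∪ N₂.map (natAddPair r)) (Fin.append μ ν) := by
  rw [raisingOp, raisingOp, raisingOp, sum_mul_sum,
    sum_powerset_union (disjoint_map_castAddPair_natAddPair N₁ N₂), sum_powerset_map]
  refine sum_congr rfl fun S _ => ?_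
  rw [sum_powerset_map]
  refine sum_congr rfl fun T _ => ?_
  rw [card_union_of_disjoint (disjoint_map_castAddPair_natAddPair S T), card_map,
    card_map, sum_root_union_map, Fin.append_add_append, gjtEnd_append, pow_add,
    smul_mul_smul_comm]

end Concatenation

theorem catalanOp_comp_general (r m : ℕ)
    (Ψ : Finset (Fin r × Fin r))
    (Φ : Finset (Fin m × Fin m))
    (μ : Fin r → ℤ) (ν : Fin m → ℤ) :
    catalanOp Ψ μ ∘ catalanOp Φ ν = catalanOp (uplus Ψ Φ) (Fin.append μ ν) := by
  rw [catalanOp_eq_raisingOp, catalanOp_eq_raisingOp, catalanOp_eq_raisingOp, compl_uplus,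
    ← raisingOp_mul_raisingOp]
  rfl

/-- Catalan operators obey the composition law: for any indexed
root ideals `(Ψ,μ)` of length `r` and `(Φ,ν)` of length `ℓ - r`, the composition
of operators satisfies `H^Ψ_μ ∘ H^Φ_ν = H^{Ψ⊎Φ}_{μν}` in `End_{ℤ[t]}(Λ)`. -/
theorem catalanOp_comp (r m : ℕ)
    (Ψ : Finset (Fin r × Fin r)) (hΨ : IsRootIdeal Ψ)
    (Φ : Finset (Fin m × Fin m)) (hΦ : IsRootIdeal Φ)
    (μ : Fin r → ℤ) (ν : Fin m → ℤ) :
    catalanOp Ψ μ ∘ catalanOp Φ ν = catalanOp (uplus Ψ Φ) (Fin.append μ ν) :=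
  catalanOp_comp_general r m Ψ Φ μ ν

end
end

section
/- For any indexed root ideals (Ψ,μ) and (Φ,ν), the t = 1 specializations of Catalan functions multiply as H(Ψ;μ)(x;1) · H(Φ;ν)(x;1) = H(Ψ⊎Φ;μν)(x;1). -/
open scoped BigOperators Classical

noncomputable section

/-! At `t = 1` the Catalan function is `∏_{Ψ} (1 - R)⁻¹ s_γ`. By Jacobi–Trudi, proved through
the Vandermonde determinant in the group algebra of `ℤ^ℓ`, `s_γ = ∏_{Δ⁺} (1 - R) h_γ`, so the
factors indexed by `Ψ` cancel and `H(Ψ;γ)(x;1) = ∏_{Δ⁺∖Ψ} (1 - R) h_γ`. The cancellation is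
legitimate because the geometric series `(1 - R)⁻¹` may be truncated: every `R_{ij}` lowers the
weight `∑ i γ_i`, and `h_γ` vanishes at negative weight. Finally `Δ⁺∖(Ψ⊎Φ)` has no root joining
the two blocks and `h_{μν} = h_μ h_ν`, so the operator for `Ψ⊎Φ` applied to `h_{μν}` is the
product of the operators for `Ψ` and `Φ` applied to `h_μ` and `h_ν`. -/

namespace CatalanT1

open Finset AddMonoidAlgebra

variable {ℓ : ℕ}

abbrev GA (ℓ : ℕ) : Type := AddMonoidAlgebra ℤ (Fin ℓ → ℤ)

def rootVec (p : Fin ℓ × Fin ℓ) : Fin ℓ → ℤ := Pi.single p.1 1 - Pi.single p.2 1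

def raising (p : Fin ℓ × Fin ℓ) : GA ℓ := single (rootVec p) 1

def weight : (Fin ℓ → ℤ) →ₗ[ℤ] ℤ := Fintype.linearCombination ℤ fun i : Fin ℓ => (i : ℤ)

lemma mem_Dplus {p : Fin ℓ × Fin ℓ} : p ∈ Dplus ℓ ↔ p.1 < p.2 := by
  simp [Dplus]

lemma weight_apply (v : Fin ℓ → ℤ) : weight v = ∑ i, v i * i := by
  simp [weight, Fintype.linearCombination_apply]

lemma weight_rootVec (p : Fin ℓ × Fin ℓ) : weight (rootVec p) = p.1 - p.2 := by
  simp [rootVec, weight, Fintype.linearCombination_apply_single]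

lemma weight_sum_smul_rootVec (n : Fin ℓ × Fin ℓ → ℕ) :
    weight (∑ p, n p • rootVec p) = -∑ p, (n p : ℤ) * (p.2 - p.1) := by
  rw [map_sum, ← sum_neg_distrib]
  exact sum_congr rfl fun p _ => by rw [map_nsmul, weight_rootVec, nsmul_eq_mul]; ring

lemma exists_lt_of_weight_lt {v b : Fin ℓ → ℤ} (h : weight v < weight b) : ∃ i, v i < b i := by
  by_contra! hle
  refine h.not_ge ?_
  simp only [weight_apply]
  exact sum_le_sum fun i _ => mul_le_mul_of_nonneg_right (hle i) (Int.natCast_nonneg _)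

lemma catalanFn_summand_index_eq (γ : Fin ℓ → ℤ) (n : Fin ℓ × Fin ℓ → ℕ) :
    (fun a => γ a + ∑ p : Fin ℓ × Fin ℓ,
      (n p : ℤ) * ((if p.1 = a then 1 else 0) - (if p.2 = a then 1 else 0))) =
      γ + ∑ p, n p • rootVec p := by
  ext a
  simp [rootVec, Finset.sum_apply, Pi.single_apply, eq_comm, mul_sub]

lemma schur_eq_zero_of_weight_lt {γ : Fin ℓ → ℤ}
    (h : weight γ < weight fun i : Fin ℓ => (i : ℤ) + 1 - ℓ) : schur γ = 0 := by
  obtain ⟨i, hi⟩ := exists_lt_of_weight_lt h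
  refine Matrix.det_eq_zero_of_row_eq_zero i fun j => ?_
  have : (j : ℤ) < ℓ := by exact_mod_cast j.isLt
  simp only [Matrix.of_apply, hh]
  rw [if_pos (by omega)]

lemma specT1_tC : specT1 tC = 1 := by
  simp [specT1, tC]

def hProd (γ : Fin ℓ → ℤ) : SymFZ := ∏ i, specT1 (hh (γ i))

lemma hProd_eq_zero_of_weight_neg {γ : Fin ℓ → ℤ} (h : weight γ < 0) : hProd γ = 0 := by
  obtain ⟨i, hi⟩ := exists_lt_of_weight_lt (v := γ) (b := 0) (by rwa [map_zero])
  exact prod_eq_zero (mem_univ i) (by simp [hh, show γ i < 0 from hi])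

/-- Raising operators act on `h_γ` through this map: `R^δ h_γ = h_{γ+δ}`. -/
def hEval (γ : Fin ℓ → ℤ) : GA ℓ →ₗ[ℤ] SymFZ :=
  (Finsupp.linearCombination ℤ fun δ => hProd (γ + δ)) ∘ₗ (coeffLinearEquiv ℤ).toLinearMap

lemma hEval_single (γ δ : Fin ℓ → ℤ) (c : ℤ) : hEval γ (single δ c) = c • hProd (γ + δ) :=
  Finsupp.linearCombination_single ℤ c δ

lemma hEval_single_mul (γ δ : Fin ℓ → ℤ) (f : GA ℓ) :
    hEval γ (single δ 1 * f) = hEval (γ + δ) f := by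
  induction f using AddMonoidAlgebra.induction_linear with
  | zero => simp
  | add f g hf hg => rw [mul_add, map_add, map_add, hf, hg]
  | single δ' c => rw [single_mul_single, one_mul, hEval_single, hEval_single, add_assoc]

@[to_additive]
lemma prod_Dplus {M : Type*} [CommMonoid M] (f : Fin ℓ × Fin ℓ → M) :
    ∏ p ∈ Dplus ℓ, f p = ∏ i, ∏ j ∈ Ioi i, f (i, j) := by
  rw [Dplus, prod_filter, Fintype.prod_prod_type]
  refine prod_congr rfl fun i _ => ?_
  rw [← prod_filter, filter_lt_eq_Ioi]

lemma sum_Dplus_single_snd :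
    ∑ p ∈ Dplus ℓ, Pi.single p.2 (1 : ℤ) = fun a : Fin ℓ => (a : ℤ) := by
  ext a
  rw [Finset.sum_apply, sum_Dplus]
  simp [Pi.single_apply, filter_gt_eq_Iio]

lemma det_vandermonde_single :
    (Matrix.vandermonde fun i : Fin ℓ => (single (Pi.single i 1) 1 : GA ℓ)).det =
      ∑ σ : Equiv.Perm (Fin ℓ), (σ.sign : ℤ) • single (fun a => (σ a : ℤ)) 1 := by
  rw [← Matrix.det_transpose, Matrix.det_apply]
  refine sum_congr rfl fun σ _ => ?_
  simp only [Matrix.transpose_apply, Matrix.vandermonde_apply, single_pow, prod_single, one_pow,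
    prod_const_one, Units.smul_def]
  congr 3
  ext a
  simp [Finset.sum_apply, Pi.single_apply]

lemma prod_one_sub_raising_eq_sum_perm :
    ∏ p ∈ Dplus ℓ, (1 - raising p) =
      ∑ σ : Equiv.Perm (Fin ℓ), (σ.sign : ℤ) • single (fun a => (σ a : ℤ) - a) 1 := by
  set z : Fin ℓ → GA ℓ := fun i => single (Pi.single i 1) 1
  set ρ : Fin ℓ → ℤ := fun a => a
  have hρ : IsUnit (single ρ 1 : GA ℓ) := IsUnit.of_mul_eq_one (single (-ρ) 1) <| by
    rw [single_mul_single, add_neg_cancel, one_mul, one_def]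
  have hz : ∏ p ∈ Dplus ℓ, z p.2 = single ρ 1 := by
    simp only [z, prod_single, prod_const_one, sum_Dplus_single_snd, ρ]
  refine hρ.mul_left_injective ?_
  calc (∏ p ∈ Dplus ℓ, (1 - raising p)) * single ρ 1
      = ∏ p ∈ Dplus ℓ, (1 - raising p) * z p.2 := by rw [← hz, prod_mul_distrib]
    _ = (Matrix.vandermonde z).det := by
      rw [Matrix.det_vandermonde, ← prod_Dplus (fun p => z p.2 - z p.1)]
      refine prod_congr rfl fun p _ => ?_
      simp [z, raising, rootVec, sub_mul, single_mul_single]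
    _ = (∑ σ : Equiv.Perm (Fin ℓ), (σ.sign : ℤ) • single (fun a => (σ a : ℤ) - a) 1) *
          single ρ 1 := by
      rw [det_vandermonde_single, sum_mul]
      refine sum_congr rfl fun σ _ => ?_
      rw [smul_mul_assoc, single_mul_single, one_mul]
      congr 2
      ext a
      simp [ρ]

lemma specT1_schur (γ : Fin ℓ → ℤ) :
    specT1 (schur γ) = hEval γ (∏ p ∈ Dplus ℓ, (1 - raising p)) := by
  rw [prod_one_sub_raising_eq_sum_perm, map_sum, schur, RingHom.map_det, ← Matrix.det_transpose,
    Matrix.det_apply]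
  refine sum_congr rfl fun σ _ => ?_
  rw [map_zsmul, hEval_single, one_smul, Units.smul_def, hProd]
  congr 1
  refine prod_congr rfl fun i _ => ?_
  simp only [Matrix.transpose_apply, RingHom.mapMatrix_apply, Matrix.map_apply, Matrix.of_apply,
    Pi.add_apply]
  congr 2
  ring

def weightBot (δ : Fin ℓ → ℤ) : WithBot ℤ := weight δ

lemma weightBot_zero : weightBot (0 : Fin ℓ → ℤ) = 0 := by simp [weightBot]

lemma weightBot_add (δ δ' : Fin ℓ → ℤ) : weightBot (δ + δ') = weightBot δ + weightBot δ' := by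
  simp [weightBot]

lemma hEval_eq_zero_of_supDegree_lt {γ : Fin ℓ → ℤ} {f : GA ℓ}
    (h : f.supDegree weightBot < (-weight γ : ℤ)) : hEval γ f = 0 := by
  rw [← sum_coeff_single f, Finsupp.sum, map_sum]
  refine sum_eq_zero fun δ hδ => ?_
  rw [hEval_single, hProd_eq_zero_of_weight_neg, smul_zero]
  have := (Finset.le_sup (f := weightBot) hδ).trans_lt h
  rw [weightBot, WithBot.coe_lt_coe] at this
  rw [map_add]
  omega

lemma supDegree_raising_pow_le {p : Fin ℓ × Fin ℓ} (hp : p.1 < p.2) (k : ℕ) :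
    (raising p ^ k).supDegree weightBot ≤ (-k : ℤ) := by
  rw [raising, single_pow, one_pow, supDegree_single_ne_zero _ one_ne_zero, weightBot,
    WithBot.coe_le_coe, map_nsmul, weight_rootVec]
  have : (p.1 : ℤ) < p.2 := by exact_mod_cast hp
  rw [nsmul_eq_mul]
  nlinarith

lemma supDegree_one_sub_raising_le {p : Fin ℓ × Fin ℓ} (hp : p.1 < p.2) :
    (1 - raising p).supDegree weightBot ≤ 0 := by
  refine supDegree_sub_le.trans (sup_le ?_ ?_)
  · rw [one_def, supDegree_single_ne_zero _ one_ne_zero, weightBot_zero]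
  · exact (pow_one (raising p) ▸ supDegree_raising_pow_le hp 1).trans (by norm_num)

lemma supDegree_prod_one_sub_raising_le {s : Finset (Fin ℓ × Fin ℓ)} (hs : s ⊆ Dplus ℓ) :
    (∏ p ∈ s, (1 - raising p)).supDegree weightBot ≤ 0 := by
  refine (supDegree_prod_le weightBot_zero weightBot_add).trans (sum_nonpos fun p hp => ?_)
  exact supDegree_one_sub_raising_le (mem_Dplus.mp (hs hp))

lemma supDegree_prod_one_sub_sub_one_le {ι : Type*} {s : Finset ι} {x : ι → GA ℓ} {c : ℤ}
    (hc : c ≤ 0) (hx : ∀ i ∈ s, (x i).supDegree weightBot ≤ c) :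
    (∏ i ∈ s, (1 - x i) - 1).supDegree weightBot ≤ c := by
  classical
  induction s using Finset.induction_on with
  | empty => simp
  | insert a s ha ih =>
    set P := ∏ i ∈ s, (1 - x i)
    have hP1 : (P - 1).supDegree weightBot ≤ c := ih fun i hi => hx i (mem_insert_of_mem hi)
    have hP : P.supDegree weightBot ≤ 0 := by
      rw [← sub_add_cancel P 1]
      refine supDegree_add_le.trans (sup_le (hP1.trans (by exact_mod_cast hc)) ?_)
      rw [one_def, supDegree_single_ne_zero _ one_ne_zero, weightBot_zero]
    rw [prod_insert ha, show (1 - x a) * P - 1 = (P - 1) - x a * P by ring]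
    refine supDegree_sub_le.trans (sup_le hP1 ((supDegree_mul_le weightBot_add).trans ?_))
    simpa using add_le_add (hx a (mem_insert_self a s)) hP

lemma le_weight_sub_of_weight_le {γ b : Fin ℓ → ℤ} {n : Fin ℓ × Fin ℓ → ℕ}
    (hn : ∀ p, n p ≠ 0 → p.1 < p.2) (h : weight b ≤ weight (γ + ∑ p, n p • rootVec p))
    (q : Fin ℓ × Fin ℓ) : (n q : ℤ) ≤ weight γ - weight b := by
  have hterm : ∀ p, (n p : ℤ) ≤ n p * (p.2 - p.1) := fun p => by
    by_cases hp : n p = 0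
    · simp [hp]
    · have : (p.1 : ℤ) < p.2 := by exact_mod_cast hn p hp
      nlinarith
  have hsum : (n q : ℤ) ≤ ∑ p, n p * ((p.2 : ℤ) - p.1) :=
    (single_le_sum (fun p _ => by positivity) (mem_univ q)).trans (sum_le_sum fun p _ => hterm p)
  rw [map_add, weight_sum_smul_rootVec] at h
  omega

/-- Raising multiplicities above this bound contribute nothing at `t = 1`. -/
def truncBound (γ : Fin ℓ → ℤ) : ℕ := (weight γ - weight fun i : Fin ℓ => (i : ℤ) + 1 - ℓ).toNat

lemma weight_le_truncBound (γ : Fin ℓ → ℤ) : weight γ ≤ truncBound γ := by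
  have : weight (fun i : Fin ℓ => (i : ℤ) + 1 - ℓ) ≤ 0 := by
    rw [weight_apply]
    refine sum_nonpos fun i _ => ?_
    have : (i : ℤ) < ℓ := by exact_mod_cast i.isLt
    nlinarith [Int.natCast_nonneg (i : ℕ)]
  rw [truncBound]
  omega

def boundedMults (Ψ : Finset (Fin ℓ × Fin ℓ)) (N : ℕ) : Finset (Fin ℓ × Fin ℓ → ℕ) :=
  Fintype.piFinset fun p => if p ∈ Ψ then range (N + 1) else {0}

lemma specT1_catalanFn_eq_sum {Ψ : Finset (Fin ℓ × Fin ℓ)} (hΨ : Ψ ⊆ Dplus ℓ) (γ : Fin ℓ → ℤ) :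
    specT1 (catalanFn Ψ γ) = ∑ n ∈ boundedMults Ψ (truncBound γ),
      specT1 (schur (γ + ∑ p, n p • rootVec p)) := by
  rw [catalanFn]
  simp_rw [catalanFn_summand_index_eq]
  rw [finsum_eq_finsetSum_of_support_subset (s := boundedMults Ψ (truncBound γ)), map_sum]
  · refine sum_congr rfl fun n hn => ?_
    have hsupp : ∀ p, p ∉ Ψ → n p = 0 := fun p hp => by
      simpa [boundedMults, hp] using Fintype.mem_piFinset.mp hn p
    rw [if_pos hsupp, map_mul, map_pow, specT1_tC, one_pow, one_mul]
  · intro n hn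
    rw [Function.mem_support, ne_eq, ite_eq_right_iff, Classical.not_imp] at hn
    obtain ⟨hsupp, hne⟩ := hn
    have hschur : schur (γ + ∑ p, n p • rootVec p) ≠ 0 := fun h => hne (by rw [h, mul_zero])
    have hn' : ∀ p, n p ≠ 0 → p.1 < p.2 := fun p hp => by
      by_contra hlt
      exact hp (hsupp p fun hpΨ => hlt (mem_Dplus.mp (hΨ hpΨ)))
    have hbound := le_weight_sub_of_weight_le hn'
      (not_lt.mp fun h => hschur (schur_eq_zero_of_weight_lt h))
    simp only [boundedMults, Finset.mem_coe, Fintype.mem_piFinset]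
    intro p
    split_ifs with hp
    · have := hbound p
      rw [mem_range, truncBound]
      omega
    · simp [hsupp p hp]

lemma sum_boundedMults_single (Ψ : Finset (Fin ℓ × Fin ℓ)) (N : ℕ) :
    ∑ n ∈ boundedMults Ψ N, (single (∑ p, n p • rootVec p) 1 : GA ℓ) =
      ∏ p ∈ Ψ, ∑ k ∈ range (N + 1), raising p ^ k := by
  have hsingle : ∀ n : Fin ℓ × Fin ℓ → ℕ,
      (single (∑ p, n p • rootVec p) 1 : GA ℓ) = ∏ p, raising p ^ n p := fun n => by
    simp only [raising, single_pow, prod_single, one_pow, prod_const_one]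
  simp_rw [hsingle, boundedMults]
  rw [← prod_univ_sum, ← prod_subset (subset_univ Ψ) fun p _ hp => by simp [hp]]
  exact prod_congr rfl fun p hp => by simp [hp]

lemma hEval_prod_one_sub_pow_mul {γ : Fin ℓ → ℤ} {Ψ : Finset (Fin ℓ × Fin ℓ)}
    (hΨ : Ψ ⊆ Dplus ℓ) {N : ℕ} (hN : weight γ ≤ N) {Q : GA ℓ}
    (hQ : Q.supDegree weightBot ≤ 0) :
    hEval γ ((∏ p ∈ Ψ, (1 - raising p ^ (N + 1))) * Q) = hEval γ Q := by
  rw [← sub_add_cancel (∏ p ∈ Ψ, _) 1, add_mul, one_mul, map_add,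
    hEval_eq_zero_of_supDegree_lt, zero_add]
  have htrunc := supDegree_prod_one_sub_sub_one_le (s := Ψ) (x := fun p => raising p ^ (N + 1))
    (c := -(N + 1 : ℕ)) (by omega)
    fun p hp => supDegree_raising_pow_le (mem_Dplus.mp (hΨ hp)) _
  refine ((supDegree_mul_le weightBot_add).trans (add_le_add htrunc hQ)).trans_lt ?_
  rw [add_zero, WithBot.coe_lt_coe]
  omega

theorem specT1_catalanFn {Ψ : Finset (Fin ℓ × Fin ℓ)} (hΨ : Ψ ⊆ Dplus ℓ) (γ : Fin ℓ → ℤ) :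
    specT1 (catalanFn Ψ γ) = hEval γ (∏ p ∈ Dplus ℓ \ Ψ, (1 - raising p)) := by
  rw [specT1_catalanFn_eq_sum hΨ]
  simp_rw [specT1_schur, ← hEval_single_mul]
  rw [← map_sum, ← sum_mul, sum_boundedMults_single, ← prod_sdiff hΨ,
    mul_comm (∏ p ∈ Dplus ℓ \ Ψ, _), ← mul_assoc, ← prod_mul_distrib]
  simp_rw [geom_sum_mul_neg]
  exact hEval_prod_one_sub_pow_mul hΨ (weight_le_truncBound γ)
    (supDegree_prod_one_sub_raising_le sdiff_subset)

section Append

variable {r m : ℕ}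

def appendLeft (r m : ℕ) : (Fin r → ℤ) →+ (Fin (r + m) → ℤ) where
  toFun v := Fin.append v 0
  map_zero' := by ext i; refine Fin.addCases (fun _ => ?_) (fun _ => ?_) i <;> simp
  map_add' v w := by ext i; refine Fin.addCases (fun _ => ?_) (fun _ => ?_) i <;> simp

def appendRight (r m : ℕ) : (Fin m → ℤ) →+ (Fin (r + m) → ℤ) where
  toFun v := Fin.append 0 v
  map_zero' := by ext i; refine Fin.addCases (fun _ => ?_) (fun _ => ?_) i <;> simp
  map_add' v w := by ext i; refine Fin.addCases (fun _ => ?_) (fun _ => ?_) i <;> simp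

lemma hProd_append (μ : Fin r → ℤ) (ν : Fin m → ℤ) :
    hProd (Fin.append μ ν) = hProd μ * hProd ν := by
  simp [hProd, Fin.prod_univ_add]

lemma append_add_appendLeft_add_appendRight (μ δ : Fin r → ℤ) (ν δ' : Fin m → ℤ) :
    Fin.append μ ν + (appendLeft r m δ + appendRight r m δ') = Fin.append (μ + δ) (ν + δ') := by
  ext i
  refine Fin.addCases (fun _ => ?_) (fun _ => ?_) i <;> simp [appendLeft, appendRight]

lemma hEval_append_mul (μ : Fin r → ℤ) (ν : Fin m → ℤ) (f : GA r) (g : GA m) :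
    hEval (Fin.append μ ν)
        (mapDomainRingHom ℤ (appendLeft r m) f * mapDomainRingHom ℤ (appendRight r m) g) =
      hEval μ f * hEval ν g := by
  induction f using AddMonoidAlgebra.induction_linear with
  | zero => simp
  | add f f' hf hf' => rw [map_add, add_mul, map_add, hf, hf', map_add, add_mul]
  | single δ c =>
    induction g using AddMonoidAlgebra.induction_linear with
    | zero => simp
    | add g g' hg hg' => rw [map_add, mul_add, map_add, hg, hg', map_add, mul_add]
    | single δ' c' =>
      simp only [mapDomainRingHom_apply, mapDomain_single, single_mul_single, hEval_single,
        append_add_appendLeft_add_appendRight, hProd_append]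
      rw [mul_smul_comm, smul_mul_assoc, smul_smul, mul_comm c']

lemma castAdd_ne_natAdd (i : Fin r) (j : Fin m) : Fin.castAdd m i ≠ Fin.natAdd r j := by
  simp [Fin.ext_iff]
  omega

def embedLeft (r m : ℕ) : Fin r × Fin r ↪ Fin (r + m) × Fin (r + m) :=
  (Fin.castAddEmb m).prodMap (Fin.castAddEmb m)

def embedRight (r m : ℕ) : Fin m × Fin m ↪ Fin (r + m) × Fin (r + m) :=
  (Fin.natAddEmb r).prodMap (Fin.natAddEmb r)

lemma mapDomain_raising_left (p : Fin r × Fin r) :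
    mapDomainRingHom ℤ (appendLeft r m) (raising p) = raising (embedLeft r m p) := by
  simp only [raising, mapDomainRingHom_apply, mapDomain_single]
  congr 1
  ext i
  refine Fin.addCases (fun _ => ?_) (fun _ => ?_) i <;>
    simp [appendLeft, embedLeft, rootVec, Pi.single_apply, (castAdd_ne_natAdd _ _).symm]

lemma mapDomain_raising_right (p : Fin m × Fin m) :
    mapDomainRingHom ℤ (appendRight r m) (raising p) = raising (embedRight r m p) := by
  simp only [raising, mapDomainRingHom_apply, mapDomain_single]
  congr 1
  ext i
  refine Fin.addCases (fun _ => ?_) (fun _ => ?_) i <;>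
    simp [appendRight, embedRight, rootVec, Pi.single_apply, castAdd_ne_natAdd]

lemma disjoint_map_embedLeft_embedRight (s : Finset (Fin r × Fin r))
    (t : Finset (Fin m × Fin m)) :
    Disjoint (s.map (embedLeft r m)) (t.map (embedRight r m)) := by
  simp only [disjoint_left, mem_map, not_exists, not_and]
  rintro _ ⟨p, -, rfl⟩ q - h
  exact castAdd_ne_natAdd p.1 q.1 (congrArg Prod.fst h).symm

lemma uplus_subset_Dplus (Ψ : Finset (Fin r × Fin r)) (Φ : Finset (Fin m × Fin m)) :
    uplus Ψ Φ ⊆ Dplus (r + m) :=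
  filter_subset _ _

lemma Dplus_sdiff_uplus (Ψ : Finset (Fin r × Fin r)) (Φ : Finset (Fin m × Fin m)) :
    Dplus (r + m) \ uplus Ψ Φ =
      (Dplus r \ Ψ).map (embedLeft r m) ∪ (Dplus m \ Φ).map (embedRight r m) := by
  ext p
  simp only [Dplus, uplus, Prod.exists, not_or, not_exists, not_and, mem_sdiff, mem_filter,
    mem_univ, true_and, not_forall, Decidable.not_not, embedLeft, embedRight,
    mem_union, mem_map, Function.Embedding.coe_prodMap, Fin.coe_castAddEmb, Prod.ext_iff,
    Prod.map_fst, Fin.ext_iff, Fin.val_castAdd, Prod.map_snd, Fin.natAddEmb_apply, Fin.val_natAdd]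
  grind

end Append

end CatalanT1

open CatalanT1 Finset in
/-- For any indexed root ideals `(Ψ,μ)` and `(Φ,ν)`, the
`t = 1` specializations of Catalan functions multiply as
`H(Ψ;μ)(x;1) · H(Φ;ν)(x;1) = H(Ψ⊎Φ; μν)(x;1)`. -/
theorem catalanFn_t1_mul (r m : ℕ)
    (Ψ : Finset (Fin r × Fin r)) (hΨ : IsRootIdeal Ψ)
    (Φ : Finset (Fin m × Fin m)) (hΦ : IsRootIdeal Φ)
    (μ : Fin r → ℤ) (ν : Fin m → ℤ) :
    specT1 (catalanFn Ψ μ) * specT1 (catalanFn Φ ν) =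
      specT1 (catalanFn (uplus Ψ Φ) (Fin.append μ ν)) := by
  rw [specT1_catalanFn hΨ.1, specT1_catalanFn hΦ.1,
    specT1_catalanFn (uplus_subset_Dplus Ψ Φ),
    Dplus_sdiff_uplus, prod_union (disjoint_map_embedLeft_embedRight _ _), prod_map, prod_map,
    ← hEval_append_mul, map_prod, map_prod]
  simp only [map_sub, map_one, mapDomain_raising_left, mapDomain_raising_right]

end
end

section
/- Let w ∈ S_{k+1} and set (I_1,…,I_{k+1}) = Inv(w₀w). For each i ∈ [k−1], the number n_i of parts of size i in θ(w) satisfies: n_i = I_i − I_{i+1} − 1 if i ∉ D(w), and n_i = k − i + I_i − I_{i+1} if i ∈ D(w). Moreover, writing w in its unique factorization w = c_k^{m_0} c_{k−1}^{m_1} ⋯ c_1^{m_{k−1}} with 0 ≤ m_i ≤ k−i for all i, where c_i = s_{k+1−i}⋯s_k (products of adjacent transpositions), one has n_i = m_i for all i ∈ [k−1]. (This determines θ(w) completely since θ(w) is irreducible and thus has only parts of size ≤ k−1.) -/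
open scoped BigOperators Classical

noncomputable section

/-- The longest element `w₀` of `S_{k+1}` (0-based one-line notation `i ↦ k - i`). -/
def w0 (k : ℕ) : Equiv.Perm (Fin (k + 1)) := Fin.revPerm

/-- The inversion sequence: `Inv_i(v) = #{j > i : v_i > v_j}` for `1 ≤ i ≤ k+1`
(1-based positions). -/
def invOf (k : ℕ) (v : Equiv.Perm (Fin (k + 1))) (i : ℕ) : ℕ :=
  if h : 1 ≤ i ∧ i ≤ k + 1 then
    (Finset.univ.filter fun j : Fin (k + 1) =>
      i - 1 < (j : ℕ) ∧ v j < v ⟨i - 1, by omega⟩).card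
  else 0

/-- `i ∈ D(w)`: `w` has a descent at (1-based) position `i`, i.e. `w_i > w_{i+1}`. -/
def isDescent (k : ℕ) (w : Equiv.Perm (Fin (k + 1))) (i : ℕ) : Prop :=
  ∃ h : 1 ≤ i ∧ i ≤ k, w ⟨i, by omega⟩ < w ⟨i - 1, by omega⟩

/-- The length of the `i`-th column (1 ≤ i ≤ k) of the partition `ζ(w)`:
`binom(k+1-i, 2) + Inv_i(w₀ w)`. -/
def zetaCol (k : ℕ) (w : Equiv.Perm (Fin (k + 1))) (i : ℕ) : ℕ :=
  if 1 ≤ i ∧ i ≤ k then Nat.choose (k + 1 - i) 2 + invOf k (w0 k * w) i else 0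

/-- The number of parts of size `i` of `ζ(w)`. -/
def nZeta (k : ℕ) (w : Equiv.Perm (Fin (k + 1))) (i : ℕ) : ℕ :=
  zetaCol k w i - zetaCol k w (i + 1)

/-- The number of parts of size `i` of `θ(w) = ζ(w)↓`, the irreducible partition
obtained from `ζ(w)` by removing as many `k`-rectangles `R_i = (i^{k+1-i})` as
possible: the multiplicity of `i` is reduced modulo `k + 1 - i`. -/
def nTheta (k : ℕ) (w : Equiv.Perm (Fin (k + 1))) (i : ℕ) : ℕ :=
  nZeta k w i % (k + 1 - i)

/-- The length of the `c`-th column of `θ(w)`, i.e. the number of parts of `θ(w)`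
of size `≥ c`. -/
def thetaCol (k : ℕ) (w : Equiv.Perm (Fin (k + 1))) (c : ℕ) : ℕ :=
  ∑ x ∈ Finset.Icc c k, nTheta k w x

/-- The adjacent transposition `s_j ∈ S_{k+1}` swapping (1-based) positions `j, j+1`. -/
def sTrans (k : ℕ) (j : ℕ) : Equiv.Perm (Fin (k + 1)) :=
  if h : 1 ≤ j ∧ j ≤ k then Equiv.swap ⟨j - 1, by omega⟩ ⟨j, by omega⟩ else 1

/-- The cycle `c_i = s_{k+1-i} s_{k+2-i} ⋯ s_k`. -/
def cPerm (k : ℕ) (i : ℕ) : Equiv.Perm (Fin (k + 1)) :=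
  ((List.range i).map fun t => sTrans k (k + 1 - i + t)).prod

/-!
Put `v = w₀ w` and `I_i = Inv_i(v)`. The column lengths of `ζ(w)` give
`n_i(ζ(w)) = k - i + I_i - I_{i+1}`, which `θ` reduces modulo `k + 1 - i`; whether `i` is a
descent of `w` fixes the sign of `I_i - I_{i+1}` and hence the residue.

For the factorization, the values of the partial product `c_k^{m_0} ⋯ c_{k+1-s}^{m_{s-1}}`
at the positions `s, …, k` are cyclically ordered: their relative ranks are a rotation of
`0, 1, …, k - s`. The next factor `c_{k-s}^{m_s}` rotates this block by `m_s`, deleting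
position `s` keeps it cyclically ordered, and the later factors fix all positions `≤ s`.
Reading off the ranks at positions `i - 1` and `i` gives
`Inv_{i+1}(w) ≡ Inv_i(w) + m_i (mod k + 1 - i)`, and with `Inv_i(w₀ w) + Inv_i(w) = k + 1 - i`
this becomes `n_i = m_i`.
-/

open Finset

section LowerCount

variable {α : Type*} [LinearOrder α] {n : ℕ}

def lowerCount (f : Fin n → α) (a : ℕ) (z : α) : ℕ :=
  #{y : Fin n | a ≤ (y : ℕ) ∧ f y < z}

theorem card_filter_le_val (a : ℕ) : #{y : Fin n | a ≤ (y : ℕ)} = n - a := by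
  have := card_filter_add_card_filter_not (s := (univ : Finset (Fin n))) fun y => (y : ℕ) < a
  simp only [not_lt, Fin.card_filter_val_lt, card_univ, Fintype.card_fin] at this
  omega

theorem lowerCount_le (f : Fin n → α) (a : ℕ) (z : α) : lowerCount f a z ≤ n - a :=
  (card_le_card (monotone_filter_right _ fun _ _ h => h.1)).trans (card_filter_le_val a).le

theorem lowerCount_mono (f : Fin n → α) (a : ℕ) {z z' : α} (h : z ≤ z') :
    lowerCount f a z ≤ lowerCount f a z' :=
  card_le_card (monotone_filter_right _ fun _ _ hy => ⟨hy.1, hy.2.trans_le h⟩)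

theorem lowerCount_apply_lt {f : Fin n → α} {a : ℕ} {x : Fin n} {z : α} (hx : a ≤ (x : ℕ))
    (h : f x < z) : lowerCount f a (f x) < lowerCount f a z := by
  refine card_lt_card ((ssubset_iff_of_subset
    (monotone_filter_right _ fun _ _ hy => ⟨hy.1, hy.2.trans h⟩)).2 ⟨x, ?_, ?_⟩) <;>
    simp [hx, h]

theorem lowerCount_apply_lt_apply_iff {f : Fin n → α} {a : ℕ} {x y : Fin n}
    (hx : a ≤ (x : ℕ)) :
    lowerCount f a (f x) < lowerCount f a (f y) ↔ f x < f y := by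
  refine ⟨fun h => ?_, lowerCount_apply_lt hx⟩
  by_contra! hyx
  exact (lowerCount_mono f a hyx).not_gt h

theorem lowerCount_eq_lowerCount_succ_add {f : Fin n → α} {a : ℕ} (ha : a < n) (z : α) :
    lowerCount f a z = lowerCount f (a + 1) z + if f ⟨a, ha⟩ < z then 1 else 0 := by
  simp only [lowerCount, card_filter]
  rw [← sum_ite_eq_of_mem' univ ⟨a, ha⟩ (fun y => if f y < z then 1 else 0) (mem_univ _),
    ← sum_add_distrib]
  refine sum_congr rfl fun y _ => ?_
  rcases eq_or_ne y ⟨a, ha⟩ with rfl | hne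
  · simp
  · have hay : a ≤ (y : ℕ) ↔ a + 1 ≤ (y : ℕ) :=
      ⟨fun h => lt_of_le_of_ne h fun h' => hne (Fin.ext h'.symm), Nat.le_of_succ_le⟩
    simp [hne, hay]

theorem lowerCount_succ_apply_self (f : Fin n → α) {a : ℕ} (ha : a < n) :
    lowerCount f (a + 1) (f ⟨a, ha⟩) = lowerCount f a (f ⟨a, ha⟩) := by
  simp [lowerCount_eq_lowerCount_succ_add ha]

theorem lowerCount_rev_comp_add {p a : ℕ} {f : Fin n → Fin p} (hf : Function.Injective f)
    {x : Fin n} (hx : (x : ℕ) < a) :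
    lowerCount (Fin.rev ∘ f) a (f x).rev + lowerCount f a (f x) = n - a := by
  rw [← card_filter_le_val a, ← card_filter_add_card_filter_not (fun y => f x < f y),
    filter_filter, filter_filter]
  simp only [lowerCount, Function.comp_apply, Fin.rev_lt_rev]
  congr 2
  ext y
  simp only [mem_filter, mem_univ, true_and, and_congr_right_iff]
  intro hy
  have hne : f y ≠ f x := hf.ne fun h => by omega
  rw [not_lt, hne.le_iff_lt]

end LowerCount

def fixBelow (n a : ℕ) : Subgroup (Equiv.Perm (Fin n)) :=
  fixingSubgroup (Equiv.Perm (Fin n)) {x : Fin n | (x : ℕ) < a}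

section CyclicRanks

variable {α : Type*} [LinearOrder α] {n : ℕ}

theorem mem_fixBelow {a : ℕ} {g : Equiv.Perm (Fin n)} :
    g ∈ fixBelow n a ↔ ∀ x : Fin n, (x : ℕ) < a → g x = x := by
  simp [fixBelow, mem_fixingSubgroup_iff, Equiv.Perm.smul_def]

theorem fixBelow_anti {a b : ℕ} (h : a ≤ b) : fixBelow n b ≤ fixBelow n a :=
  fun _ hg => mem_fixBelow.2 fun x hx => mem_fixBelow.1 hg x (hx.trans_le h)

theorem le_val_apply_of_mem_fixBelow {a : ℕ} {g : Equiv.Perm (Fin n)} (hg : g ∈ fixBelow n a)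
    {x : Fin n} (hx : a ≤ (x : ℕ)) : a ≤ (g x : ℕ) := by
  by_contra! h
  have := g.injective (mem_fixBelow.1 hg (g x) h)
  omega

theorem lowerCount_comp_of_mem_fixBelow (f : Fin n → α) {a : ℕ} {g : Equiv.Perm (Fin n)}
    (hg : g ∈ fixBelow n a) (z : α) : lowerCount (f ∘ g) a z = lowerCount f a z := by
  have hg' : g⁻¹ ∈ fixBelow n a := inv_mem hg
  refine card_nbij' g (⇑g⁻¹) (fun y hy => ?_) (fun y hy => ?_)
    (fun y _ => g.symm_apply_apply y) (fun y _ => g.apply_symm_apply y)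
  · simp only [coe_filter, mem_univ, true_and, Function.comp_apply] at hy ⊢
    exact ⟨le_val_apply_of_mem_fixBelow hg hy.1, hy.2⟩
  · simp only [coe_filter, mem_univ, true_and, Function.comp_apply] at hy ⊢
    exact ⟨le_val_apply_of_mem_fixBelow hg' hy.1, by simpa using hy.2⟩

/-- The values of `f` at the positions `a, …, n - 1` are ordered like a cyclic rotation of an
increasing sequence: the value at `x` is the `(x - a + c) % (n - a)`-th smallest of them. -/
def HasCyclicRanks (f : Fin n → α) (a c : ℕ) : Prop :=
  ∀ x : Fin n, a ≤ (x : ℕ) → lowerCount f a (f x) = ((x : ℕ) - a + c) % (n - a)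

theorem hasCyclicRanks_id : HasCyclicRanks (id : Fin n → Fin n) 0 0 := by
  intro x _
  simp [lowerCount, Nat.mod_eq_of_lt x.isLt, filter_gt_eq_Iio]

namespace HasCyclicRanks

variable {f : Fin n → α} {a c : ℕ}

theorem mod (hf : HasCyclicRanks f a c) : HasCyclicRanks f a (c % (n - a)) := by
  intro x hx
  rw [hf x hx, Nat.add_mod_mod]

theorem comp (hf : HasCyclicRanks f a c) {g : Equiv.Perm (Fin n)} (hg : g ∈ fixBelow n a)
    {m : ℕ}
    (hrot : ∀ x : Fin n, a ≤ (x : ℕ) → (g x : ℕ) = a + ((x : ℕ) - a + m) % (n - a)) :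
    HasCyclicRanks (f ∘ g) a (m + c) := by
  intro x hx
  rw [lowerCount_comp_of_mem_fixBelow f hg, Function.comp_apply,
    hf (g x) (le_val_apply_of_mem_fixBelow hg hx), hrot x hx, Nat.add_sub_cancel_left,
    Nat.mod_add_mod, add_assoc]

theorem lowerCount_apply_self (hf : HasCyclicRanks f a c) (hc : c < n - a) (ha : a < n) :
    lowerCount f a (f ⟨a, ha⟩) = c := by
  rw [hf _ le_rfl, Nat.sub_self, zero_add, Nat.mod_eq_of_lt hc]

theorem lowerCount_succ_apply_self (hf : HasCyclicRanks f a c) (hc : c < n - a) (ha : a < n) :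
    lowerCount f (a + 1) (f ⟨a, ha⟩) = c := by
  rw [_root_.lowerCount_succ_apply_self, hf.lowerCount_apply_self hc]

private theorem add_mod_eq_pred_add_mod_pred {N j c : ℕ} (hj : 0 < j) (hjN : j < N)
    (hc : c < N) :
    (j + c) % N = (j - 1 + c) % (N - 1) + if c < (j + c) % N then 1 else 0 := by
  rcases lt_or_ge (j + c) N with h | h
  · rw [Nat.mod_eq_of_lt h, Nat.mod_eq_of_lt (by omega), if_pos (by omega)]
    omega
  · rw [Nat.mod_eq_sub_mod h, Nat.mod_eq_of_lt (by omega), Nat.mod_eq_sub_mod (by omega),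
      Nat.mod_eq_of_lt (by omega), if_neg (by omega)]
    omega

/-- Deleting the first position of a cyclically ordered block keeps the offset: the deleted value
has rank `c`, so it lies below exactly those later values whose rank exceeds `c`. -/
theorem succ (hf : HasCyclicRanks f a c) (hc : c < n - a) : HasCyclicRanks f (a + 1) c := by
  intro x hx
  have ha : a < n := by omega
  have hxa : a ≤ (x : ℕ) := by omega
  have hlt : f ⟨a, ha⟩ < f x ↔ c < ((x : ℕ) - a + c) % (n - a) := by
    rw [← hf x hxa, ← hf.lowerCount_apply_self hc ha]
    exact (lowerCount_apply_lt_apply_iff (x := ⟨a, ha⟩) le_rfl).symm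
  have hrank := lowerCount_eq_lowerCount_succ_add (f := f) ha (f x)
  have hshift := add_mod_eq_pred_add_mod_pred (N := n - a) (j := x - a) (c := c) (by omega)
    (by omega) hc
  simp only [hlt, ← hf x hxa] at hrank hshift
  rw [show (x : ℕ) - (a + 1) = x - a - 1 by omega, show n - (a + 1) = n - a - 1 by omega]
  omega

end HasCyclicRanks

end CyclicRanks

section Cycles

variable {k : ℕ}

theorem cPerm_succ {i : ℕ} (hi : i < k) : cPerm k (i + 1) = sTrans k (k - i) * cPerm k i := by
  rw [cPerm, cPerm, List.range_succ_eq_map, List.map_cons, List.prod_cons, List.map_map]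
  congr 2
  · omega
  · congr 1
    funext t
    simp only [Function.comp_apply]
    congr 1
    omega

theorem cPerm_apply {i : ℕ} (hi : i ≤ k) (x : Fin (k + 1)) :
    (cPerm k i x : ℕ) =
      if (x : ℕ) < k - i then (x : ℕ) else if (x : ℕ) = k then k - i else x + 1 := by
  induction i generalizing x with
  | zero =>
    simp only [cPerm, List.range_zero, List.map_nil, List.prod_nil, Equiv.Perm.one_apply]
    split_ifs <;> omega
  | succ i ih =>
    rw [cPerm_succ (by omega), Equiv.Perm.mul_apply, sTrans, dif_pos (by omega),
      Equiv.swap_apply_def]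
    have hx := ih (by omega) x
    split_ifs at hx ⊢ <;> simp only [Fin.ext_iff] at * <;> omega

theorem cPerm_sub_pow_apply {s : ℕ} (hs : s ≤ k) (m : ℕ) (x : Fin (k + 1))
    (hx : s ≤ (x : ℕ)) :
    ((cPerm k (k - s) ^ m) x : ℕ) = s + ((x : ℕ) - s + m) % (k + 1 - s) := by
  induction m with
  | zero => rw [pow_zero, Equiv.Perm.one_apply, add_zero, Nat.mod_eq_of_lt (by omega)]; omega
  | succ m ih =>
    rw [pow_succ', Equiv.Perm.mul_apply, cPerm_apply (by omega), ih, ← add_assoc,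
      ← Nat.mod_add_mod ((x : ℕ) - s + m)]
    have hr := Nat.mod_lt ((x : ℕ) - s + m) (show 0 < k + 1 - s by omega)
    generalize ((x : ℕ) - s + m) % (k + 1 - s) = r at hr ⊢
    rcases (by omega : r + 1 < k + 1 - s ∨ r + 1 = k + 1 - s) with h | h
    · rw [Nat.mod_eq_of_lt h]
      split_ifs <;> omega
    · rw [h, Nat.mod_self]
      split_ifs <;> omega

theorem cPerm_sub_mem_fixBelow (t : ℕ) : cPerm k (k - t) ∈ fixBelow (k + 1) t :=
  mem_fixBelow.2 fun x hx => Fin.ext <| by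
    rw [cPerm_apply (Nat.sub_le k t)]
    split_ifs <;> omega

end Cycles

section Factorization

variable {k : ℕ} {m : ℕ → ℕ}

def cProd (k : ℕ) (m : ℕ → ℕ) (s : ℕ) : Equiv.Perm (Fin (k + 1)) :=
  ((List.range s).map fun t => cPerm k (k - t) ^ m t).prod

theorem cProd_succ (s : ℕ) : cProd k m (s + 1) = cProd k m s * cPerm k (k - s) ^ m s := by
  simp [cProd, List.range_succ]

theorem exists_cProd_eq_mul {s s' : ℕ} (h : s ≤ s') :
    ∃ g ∈ fixBelow (k + 1) s, cProd k m s' = cProd k m s * g := by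
  induction s', h using Nat.le_induction with
  | base => exact ⟨1, one_mem _, (mul_one _).symm⟩
  | succ s' hss' ih =>
    obtain ⟨g, hg, hw⟩ := ih
    exact ⟨g * cPerm k (k - s') ^ m s',
      mul_mem hg (pow_mem (fixBelow_anti hss' (cPerm_sub_mem_fixBelow s')) _),
      by rw [cProd_succ, hw, mul_assoc]⟩

theorem HasCyclicRanks.cProd_succ {s c : ℕ} (hf : HasCyclicRanks ⇑(cProd k m s) s c)
    (hs : s ≤ k) : HasCyclicRanks ⇑(cProd k m (s + 1)) s (m s + c) := by
  rw [_root_.cProd_succ, Equiv.Perm.coe_mul]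
  exact hf.comp (pow_mem (cPerm_sub_mem_fixBelow s) _) (cPerm_sub_pow_apply hs _)

theorem exists_hasCyclicRanks_cProd {s : ℕ} (hs : s ≤ k) :
    ∃ c < k + 1 - s, HasCyclicRanks ⇑(cProd k m (s + 1)) s c := by
  induction s with
  | zero =>
    have h0 : HasCyclicRanks ⇑(cProd k m 0) 0 0 := by
      simpa [cProd] using hasCyclicRanks_id
    exact ⟨_, Nat.mod_lt _ (by omega), (h0.cProd_succ hs).mod⟩
  | succ s ih =>
    obtain ⟨c, hc, hf⟩ := ih (by omega)
    exact ⟨_, Nat.mod_lt _ (by omega), ((hf.succ hc).cProd_succ hs).mod⟩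

end Factorization

section Inversions

variable {k : ℕ}

theorem invOf_succ (v : Equiv.Perm (Fin (k + 1))) {i : ℕ} (hi : i < k + 1) :
    invOf k v (i + 1) = lowerCount ⇑v (i + 1) (v ⟨i, hi⟩) := by
  rw [invOf, dif_pos (by omega)]
  rfl

theorem invOf_succ_succ (v : Equiv.Perm (Fin (k + 1))) {i : ℕ} (hi : i + 1 < k + 1) :
    invOf k v (i + 1 + 1) = lowerCount ⇑v (i + 1) (v ⟨i + 1, hi⟩) := by
  rw [invOf_succ v hi, lowerCount_succ_apply_self]

theorem invOf_le (v : Equiv.Perm (Fin (k + 1))) (i : ℕ) : invOf k v i ≤ k + 1 - i := by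
  rcases i with _ | i
  · simp [invOf]
  · by_cases hi : i < k + 1
    · exact (invOf_succ v hi).trans_le (lowerCount_le _ _ _)
    · simp [invOf, show ¬ i + 1 ≤ k + 1 by omega]

theorem invOf_w0_mul_add_invOf (w : Equiv.Perm (Fin (k + 1))) {i : ℕ} (hi : i < k + 1) :
    invOf k (w0 k * w) (i + 1) + invOf k w (i + 1) = k - i := by
  rw [invOf_succ _ hi, invOf_succ _ hi]
  exact (lowerCount_rev_comp_add w.injective (lt_add_one i)).trans (by omega)

theorem invOf_succ_succ_lt_of_apply_lt {v : Equiv.Perm (Fin (k + 1))} {i : ℕ}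
    (hi : i + 1 < k + 1) (h : v ⟨i + 1, hi⟩ < v ⟨i, by omega⟩) :
    invOf k v (i + 1 + 1) < invOf k v (i + 1) := by
  rw [invOf_succ_succ v hi, invOf_succ v (by omega)]
  exact lowerCount_apply_lt le_rfl h

theorem invOf_succ_le_of_apply_lt {v : Equiv.Perm (Fin (k + 1))} {i : ℕ} (hi : i + 1 < k + 1)
    (h : v ⟨i, by omega⟩ < v ⟨i + 1, hi⟩) :
    invOf k v (i + 1) ≤ invOf k v (i + 1 + 1) := by
  rw [invOf_succ_succ v hi, invOf_succ v (by omega)]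
  exact lowerCount_mono _ _ h.le

end Inversions

section PartCounts

variable {k : ℕ}

theorem nZeta_add_invOf_succ (w : Equiv.Perm (Fin (k + 1))) {i : ℕ} (hi : 1 ≤ i)
    (hik : i < k) :
    nZeta k w i + invOf k (w0 k * w) (i + 1) = k - i + invOf k (w0 k * w) i := by
  have hB := invOf_le (w0 k * w) (i + 1)
  have hC : (k + 1 - i).choose 2 = (k - i).choose 2 + (k - i) := by
    rw [show k + 1 - i = k - i + 1 by omega, Nat.choose_succ_succ', Nat.choose_one_right,
      add_comm]
  simp only [nZeta, zetaCol, if_pos (show 1 ≤ i ∧ i ≤ k by omega),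
    if_pos (show 1 ≤ i + 1 ∧ i + 1 ≤ k by omega), hC, show k + 1 - (i + 1) = k - i by omega]
  omega

theorem nTheta_succ_of_not_isDescent {w : Equiv.Perm (Fin (k + 1))} {j : ℕ} (hj : j + 1 < k)
    (hw : ¬ isDescent k w (j + 1)) :
    (nTheta k w (j + 1) : ℤ) =
      invOf k (w0 k * w) (j + 1) - invOf k (w0 k * w) (j + 1 + 1) - 1 := by
  have hlt : w ⟨j, by omega⟩ < w ⟨j + 1, by omega⟩ :=
    lt_of_le_of_ne (not_lt.1 fun h => hw ⟨by omega, h⟩) (w.injective.ne (by simp))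
  have hBA := invOf_succ_succ_lt_of_apply_lt (v := w0 k * w) (by omega) (Fin.rev_lt_rev.2 hlt)
  have hA := invOf_le (w0 k * w) (j + 1)
  have hsum := nZeta_add_invOf_succ w (by omega) hj
  have hmod : nTheta k w (j + 1) = nZeta k w (j + 1) - (k - j) := by
    rw [nTheta, show k + 1 - (j + 1) = k - j by omega, Nat.mod_eq_sub_mod (by omega),
      Nat.mod_eq_of_lt (by omega)]
  omega

theorem nTheta_succ_of_isDescent {w : Equiv.Perm (Fin (k + 1))} {j : ℕ} (hj : j + 1 < k)
    (hw : isDescent k w (j + 1)) :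
    (nTheta k w (j + 1) : ℤ) =
      (k : ℤ) - (j + 1 : ℕ) + invOf k (w0 k * w) (j + 1) - invOf k (w0 k * w) (j + 1 + 1) := by
  obtain ⟨_, hlt⟩ := hw
  have hAB := invOf_succ_le_of_apply_lt (v := w0 k * w) (by omega) (Fin.rev_lt_rev.2 hlt)
  have hB := invOf_le (w0 k * w) (j + 1 + 1)
  have hsum := nZeta_add_invOf_succ w (by omega) hj
  have hmod : nTheta k w (j + 1) = nZeta k w (j + 1) := Nat.mod_eq_of_lt (by omega)
  omega

/-- Here `w = h * g` with `h = cProd k m (j + 1)` and `g` fixing the positions `≤ j` and sending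
`j + 1` to `j + 1 + m_{j+1}`, so both inversion numbers are ranks inside the cyclically ordered
block of `h` after position `j`. -/
theorem invOf_cProd_succ_succ {m : ℕ → ℕ} {j : ℕ} (hj : j + 1 < k)
    (hm : m (j + 1) ≤ k - (j + 1)) :
    invOf k (cProd k m k) (j + 1 + 1) =
      (m (j + 1) + invOf k (cProd k m k) (j + 1)) % (k - j) := by
  obtain ⟨c, hc, hf⟩ := exists_hasCyclicRanks_cProd (k := k) (m := m) (s := j) (by omega)
  obtain ⟨g, hg, hw⟩ := exists_cProd_eq_mul (k := k) (m := m) (show j + 1 + 1 ≤ k by omega)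
  rw [cProd_succ, mul_assoc] at hw
  have hfix : cPerm k (k - (j + 1)) ^ m (j + 1) * g ∈ fixBelow (k + 1) (j + 1) :=
    mul_mem (pow_mem (cPerm_sub_mem_fixBelow _) _) (fixBelow_anti (by omega) hg)
  have hshift : ((cPerm k (k - (j + 1)) ^ m (j + 1) * g) ⟨j + 1, by omega⟩ : ℕ) =
      j + 1 + m (j + 1) := by
    rw [Equiv.Perm.mul_apply, mem_fixBelow.1 hg _ (lt_add_one _),
      cPerm_sub_pow_apply (s := j + 1) (by omega) _ ⟨j + 1, by omega⟩ le_rfl, Nat.sub_self,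
      zero_add, Nat.mod_eq_of_lt (by omega)]
  generalize cPerm k (k - (j + 1)) ^ m (j + 1) * g = g' at hw hfix hshift
  have hcount (z) : lowerCount ⇑(cProd k m k) (j + 1) z =
      lowerCount ⇑(cProd k m (j + 1)) (j + 1) z := by
    rw [hw, Equiv.Perm.coe_mul, lowerCount_comp_of_mem_fixBelow _ hfix]
  rw [invOf_succ_succ _ (by omega), invOf_succ _ (by omega), hcount, hcount, hw,
    Equiv.Perm.mul_apply, Equiv.Perm.mul_apply,
    mem_fixBelow.1 hfix ⟨j, by omega⟩ (lt_add_one j),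
    hf.lowerCount_succ_apply_self hc, (hf.succ hc) _ (by omega), hshift]
  congr 1 <;> omega

private theorem sub_add_add_mod_mod {N a b : ℕ} (ha : a ≤ N) (hb : b < N) :
    (N - a + (b + a) % N) % N = b := by
  rw [Nat.add_mod_mod, show N - a + (b + a) = b + N by omega, Nat.add_mod_right,
    Nat.mod_eq_of_lt hb]

theorem nTheta_cProd_succ {m : ℕ → ℕ} {j : ℕ} (hj : j + 1 < k)
    (hm : m (j + 1) ≤ k - (j + 1)) :
    nTheta k (cProd k m k) (j + 1) = m (j + 1) := by
  set w := cProd k m k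
  have hsum := nZeta_add_invOf_succ w (by omega) hj
  have hA := invOf_w0_mul_add_invOf w (i := j) (by omega)
  have hB := invOf_w0_mul_add_invOf w (i := j + 1) (by omega)
  have hJ := invOf_le w (j + 1)
  have hnZ : nZeta k w (j + 1) = (k - j) - invOf k w (j + 1) + invOf k w (j + 1 + 1) := by omega
  rw [nTheta, hnZ, invOf_cProd_succ_succ hj hm, show k + 1 - (j + 1) = k - j by omega]
  exact sub_add_add_mod_mod (by omega) (by omega)

end PartCounts

theorem nTheta_formula_general (k : ℕ) (w : Equiv.Perm (Fin (k + 1))) :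
    (∀ i, 1 ≤ i → i ≤ k - 1 →
      (¬ isDescent k w i →
        (nTheta k w i : ℤ) =
          (invOf k (w0 k * w) i : ℤ) - (invOf k (w0 k * w) (i + 1) : ℤ) - 1) ∧
      (isDescent k w i →
        (nTheta k w i : ℤ) =
          (k : ℤ) - i + (invOf k (w0 k * w) i : ℤ) - (invOf k (w0 k * w) (i + 1) : ℤ))) ∧
    (∀ m : ℕ → ℕ, (∀ i, i ≤ k - 1 → m i ≤ k - i) →
      w = ((List.range k).map fun i => cPerm k (k - i) ^ m i).prod →
      ∀ i, 1 ≤ i → i ≤ k - 1 → nTheta k w i = m i) := by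
  refine ⟨fun i hi hik => ?_, fun m hm hw i hi hik => ?_⟩ <;>
    obtain ⟨j, rfl⟩ : ∃ j, i = j + 1 := ⟨i - 1, by omega⟩
  · exact ⟨nTheta_succ_of_not_isDescent (by omega), nTheta_succ_of_isDescent (by omega)⟩
  · subst hw
    exact nTheta_cProd_succ (by omega) (hm _ hik)

/-- Let `w ∈ S_{k+1}` and set `(I_1,…,I_{k+1}) = Inv(w₀ w)`.
For each `i ∈ [k-1]`, the number `n_i` of parts of size `i` in `θ(w)` satisfies
`n_i = I_i - I_{i+1} - 1` if `i ∉ D(w)`, and `n_i = k - i + I_i - I_{i+1}` if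
`i ∈ D(w)`.  Moreover, writing `w` in its unique factorization
`w = c_k^{m_0} c_{k-1}^{m_1} ⋯ c_1^{m_{k-1}}` with `0 ≤ m_i ≤ k - i` for all `i`,
where `c_i = s_{k+1-i} ⋯ s_k`, one has `n_i = m_i` for all `i ∈ [k-1]`. -/
theorem nTheta_formula (k : ℕ) (hk : 1 ≤ k) (w : Equiv.Perm (Fin (k + 1))) :
    (∀ i, 1 ≤ i → i ≤ k - 1 →
      (¬ isDescent k w i →
        (nTheta k w i : ℤ) =
          (invOf k (w0 k * w) i : ℤ) - (invOf k (w0 k * w) (i + 1) : ℤ) - 1) ∧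
      (isDescent k w i →
        (nTheta k w i : ℤ) =
          (k : ℤ) - i + (invOf k (w0 k * w) i : ℤ) - (invOf k (w0 k * w) (i + 1) : ℤ))) ∧
    (∀ m : ℕ → ℕ, (∀ i, i ≤ k - 1 → m i ≤ k - i) →
      w = ((List.range k).map fun i => cPerm k (k - i) ^ m i).prod →
      ∀ i, 1 ≤ i → i ≤ k - 1 → nTheta k w i = m i) :=
  nTheta_formula_general k w
end
end
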